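/- arXiv:1705.04384 — 9 statements merged into one kernel-verified Lean document; each statement's English description precedes it below -/
import Mathlib

section
/- Let (N_k) be a sequence of positive integers. For each k, let H_k and A_k be real symmetric positive definite N_k × N_k matrices and let A*_k be an arbitrary real N_k × N_k matrix. Assume there exists a constant c > 0, independent of k, such that vᵀ A_k v ≥ c · vᵀ H_k v for every vector v ∈ ℝ^{N_k} (uniform coercivity with respect to the norms represented by H_k), and assume that ‖H_k^{-1/2} (A_k − A*_k) H_k^{-1/2}‖ → 0 as k → ∞. Then sup over μ in the complex spectrum of A*_k of inf over λ in the (real, positive) spectrum of A_k of |λ − μ|/λ tends to 0 as k → ∞. -/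
open scoped Matrix.Norms.L2Operator MatrixOrder
open Matrix Filter

/-!
If `μ` is an eigenvalue of `A*` with eigenvector `w`, then `(A - μ) w = (A - A*) w`. Write
`ε = ‖H^{-1/2} (A - A*) H^{-1/2}‖`. Coercivity bounds the residual in the `A⁻¹`-form,
`((A - A*) w)ᴴ A⁻¹ ((A - A*) w) ≤ (ε / c)² wᴴ A w`, whereas in an eigenbasis of `A` the left side is
`Σ |λᵢ - μ|² / λᵢ · |wᵢ|²` and `wᴴ A w = Σ λᵢ |wᵢ|²`. So `|λ - μ| ≤ (ε / c) λ` for some eigenvalue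
`λ`, and the relative spectral distance is squeezed between `0` and `ε / c → 0`.
-/

theorem sq_mul_sum_lt_sum_inv_mul {ι : Type*} [Fintype ι] {d : ι → ℝ} (hd : ∀ i, 0 < d i)
    {δ : ℝ} (hδ : 0 ≤ δ) {μ : ℂ} (h : ∀ i, δ * d i < ‖(d i : ℂ) - μ‖) {y : ι → ℂ} (hy : y ≠ 0) :
    δ ^ 2 * ∑ i, d i * ‖y i‖ ^ 2 < ∑ i, (d i)⁻¹ * ‖((d i : ℂ) - μ) * y i‖ ^ 2 := by
  have hterm (i : ι) : δ ^ 2 * (d i * ‖y i‖ ^ 2) = (d i)⁻¹ * ((δ * d i) ^ 2 * ‖y i‖ ^ 2) := by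
    field_simp [(hd i).ne']
  obtain ⟨j, hj⟩ := Function.ne_iff.mp hy
  rw [Finset.mul_sum]
  refine Finset.sum_lt_sum (fun i _ => ?_) ⟨j, Finset.mem_univ j, ?_⟩
  · rw [hterm, norm_mul, mul_pow ‖(d i : ℂ) - μ‖]
    have := hd i
    gcongr
    exact (h i).le
  · rw [hterm, norm_mul, mul_pow ‖(d j : ℂ) - μ‖]
    have := hd j
    have : 0 < ‖y j‖ := norm_pos_iff.mpr hj
    gcongr
    exact h j

namespace Matrix

variable {n : Type*} [Fintype n]

theorem sq_dotProduct_le (u v : n → ℝ) : (u ⬝ᵥ v) ^ 2 ≤ (u ⬝ᵥ u) * (v ⬝ᵥ v) := by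
  simpa only [dotProduct, sq] using Finset.sum_mul_sq_le_sq_mul_sq Finset.univ u v

theorem IsSymm.dotProduct_mulVec {S : Matrix n n ℝ} (hS : S.IsSymm) (v w : n → ℝ) :
    v ⬝ᵥ S *ᵥ w = (S *ᵥ v) ⬝ᵥ w := by
  rw [Matrix.dotProduct_mulVec, ← mulVec_transpose, hS.eq]

theorem re_mulVec_map_ofReal (M : Matrix n n ℝ) (w : n → ℂ) (i : n) :
    ((M.map (fun x : ℝ => (x : ℂ)) *ᵥ w) i).re = (M *ᵥ fun j => (w j).re) i := by
  simp [mulVec, dotProduct, Complex.re_sum]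

theorem im_mulVec_map_ofReal (M : Matrix n n ℝ) (w : n → ℂ) (i : n) :
    ((M.map (fun x : ℝ => (x : ℂ)) *ᵥ w) i).im = (M *ᵥ fun j => (w j).im) i := by
  simp [mulVec, dotProduct, Complex.im_sum]

theorem map_ofReal_mul (M N : Matrix n n ℝ) :
    (M * N).map (fun x : ℝ => (x : ℂ))
      = M.map (fun x : ℝ => (x : ℂ)) * N.map (fun x : ℝ => (x : ℂ)) :=
  Matrix.map_mul (f := Complex.ofRealHom)

/-- `Re (wᴴ M w)`, written through `w = a + i b`. -/
noncomputable def complexQuadForm (M : Matrix n n ℝ) (w : n → ℂ) : ℝ :=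
  (fun i => (w i).re) ⬝ᵥ M *ᵥ (fun i => (w i).re) + (fun i => (w i).im) ⬝ᵥ M *ᵥ fun i => (w i).im

variable [DecidableEq n]

theorem mulVec_dotProduct_mulVec_self_le (M : Matrix n n ℝ) (y : n → ℝ) :
    (M *ᵥ y) ⬝ᵥ (M *ᵥ y) ≤ ‖M‖ ^ 2 * (y ⬝ᵥ y) := by
  have hnorm (z : n → ℝ) : z ⬝ᵥ z = ‖(EuclideanSpace.equiv n ℝ).symm z‖ ^ 2 := by
    rw [EuclideanSpace.norm_sq_eq]
    simp [dotProduct, sq]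
  rw [hnorm, hnorm, ← mul_pow]
  exact pow_le_pow_left₀ (norm_nonneg _) (l2_opNorm_mulVec M _) 2

theorem sq_dotProduct_mulVec_le {S : Matrix n n ℝ} (hS : S.IsSymm) (hSu : IsUnit S)
    (P : Matrix n n ℝ) (v x : n → ℝ) :
    (v ⬝ᵥ P *ᵥ x) ^ 2
      ≤ ‖S⁻¹ * P * S⁻¹‖ ^ 2 * (v ⬝ᵥ (S * S) *ᵥ v) * (x ⬝ᵥ (S * S) *ᵥ x) := by
  have hdet : IsUnit S.det := (isUnit_iff_isUnit_det S).mp hSu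
  set E := S⁻¹ * P * S⁻¹
  have hP : P = S * E * S := by
    simp only [E, Matrix.mul_assoc, nonsing_inv_mul _ hdet, mul_one,
      mul_nonsing_inv_cancel_left _ _ hdet]
  have hSS (y : n → ℝ) : y ⬝ᵥ (S * S) *ᵥ y = (S *ᵥ y) ⬝ᵥ (S *ᵥ y) := by
    rw [← mulVec_mulVec, hS.dotProduct_mulVec]
  calc (v ⬝ᵥ P *ᵥ x) ^ 2 = ((S *ᵥ v) ⬝ᵥ E *ᵥ (S *ᵥ x)) ^ 2 := by
        rw [hP, ← mulVec_mulVec, ← mulVec_mulVec, hS.dotProduct_mulVec]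
    _ ≤ ((S *ᵥ v) ⬝ᵥ (S *ᵥ v)) * ((E *ᵥ (S *ᵥ x)) ⬝ᵥ (E *ᵥ (S *ᵥ x))) := sq_dotProduct_le _ _
    _ ≤ ((S *ᵥ v) ⬝ᵥ (S *ᵥ v)) * (‖E‖ ^ 2 * ((S *ᵥ x) ⬝ᵥ (S *ᵥ x))) := by
        gcongr
        · exact dotProduct_self_star_nonneg _
        · exact mulVec_dotProduct_mulVec_self_le _ _
    _ = _ := by rw [hSS, hSS]; ring

-- Only the test vector `v = A⁻¹ y` of the dual description of `yᵀ A⁻¹ y` is needed.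
theorem PosDef.dotProduct_inv_mulVec_le {A : Matrix n n ℝ} (hA : A.PosDef) {y : n → ℝ} {K : ℝ}
    (hK : 0 ≤ K) (h : ∀ v, (v ⬝ᵥ y) ^ 2 ≤ K * (v ⬝ᵥ A *ᵥ v)) : y ⬝ᵥ A⁻¹ *ᵥ y ≤ K := by
  have hdet : IsUnit A.det := hA.isUnit.map detMonoidHom
  set s := y ⬝ᵥ A⁻¹ *ᵥ y
  have hs : 0 ≤ s := by simpa using hA.inv.posSemidef.dotProduct_mulVec_nonneg y
  have hv : A⁻¹ *ᵥ y ⬝ᵥ A *ᵥ (A⁻¹ *ᵥ y) = s := by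
    rw [mulVec_mulVec, mul_nonsing_inv _ hdet, one_mulVec, dotProduct_comm]
  have := h (A⁻¹ *ᵥ y)
  rw [hv, dotProduct_comm] at this
  nlinarith

theorem dotProduct_inv_mulVec_le_of_coercive {A H : Matrix n n ℝ} (hA : A.PosDef)
    (hH : H.PosDef) {c : ℝ} (hc : 0 < c) (coer : ∀ v, c * (v ⬝ᵥ H *ᵥ v) ≤ v ⬝ᵥ A *ᵥ v)
    (P : Matrix n n ℝ) (x : n → ℝ) :
    (P *ᵥ x) ⬝ᵥ A⁻¹ *ᵥ (P *ᵥ x)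
      ≤ (‖(CFC.sqrt H)⁻¹ * P * (CFC.sqrt H)⁻¹‖ / c) ^ 2 * (x ⬝ᵥ A *ᵥ x) := by
  set S := CFC.sqrt H
  have hSS : S * S = H := CFC.sqrt_mul_sqrt_self H hH.posSemidef.nonneg
  have hS : S.IsSymm := isHermitian_iff_isSymm.mp (CFC.sqrt_nonneg H).posSemidef.1
  have hSu : IsUnit S := (CFC.isUnit_sqrt_iff H hH.posSemidef.nonneg).mpr hH.isUnit
  have hAx : 0 ≤ x ⬝ᵥ A *ᵥ x := by simpa using hA.posSemidef.dotProduct_mulVec_nonneg x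
  refine hA.dotProduct_inv_mulVec_le (by positivity) fun v => ?_
  have hHv : v ⬝ᵥ H *ᵥ v ≤ (v ⬝ᵥ A *ᵥ v) / c := by rw [le_div_iff₀' hc]; exact coer v
  have hHx : x ⬝ᵥ H *ᵥ x ≤ (x ⬝ᵥ A *ᵥ x) / c := by rw [le_div_iff₀' hc]; exact coer x
  have hHx₀ : 0 ≤ x ⬝ᵥ H *ᵥ x := by simpa using hH.posSemidef.dotProduct_mulVec_nonneg x
  have hAv : 0 ≤ v ⬝ᵥ A *ᵥ v := by simpa using hA.posSemidef.dotProduct_mulVec_nonneg v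
  calc (v ⬝ᵥ P *ᵥ x) ^ 2
      ≤ ‖S⁻¹ * P * S⁻¹‖ ^ 2 * (v ⬝ᵥ H *ᵥ v) * (x ⬝ᵥ H *ᵥ x) := by
        simpa only [hSS] using sq_dotProduct_mulVec_le hS hSu P v x
    _ ≤ ‖S⁻¹ * P * S⁻¹‖ ^ 2 * ((v ⬝ᵥ A *ᵥ v) / c) * ((x ⬝ᵥ A *ᵥ x) / c) :=
        mul_le_mul (by gcongr) hHx hHx₀ (by positivity)
    _ = _ := by field_simp

theorem dotProduct_mulVec_mul_diagonal_mul_transpose (U : Matrix n n ℝ) (g x : n → ℝ) :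
    x ⬝ᵥ (U * diagonal g * Uᵀ) *ᵥ x = ∑ i, g i * (Uᵀ *ᵥ x) i ^ 2 := by
  rw [← mulVec_mulVec, ← mulVec_mulVec, Matrix.dotProduct_mulVec (A := U), ← mulVec_transpose]
  simp only [mulVec_diagonal, dotProduct]
  congr 1; funext i; ring

theorem complexQuadForm_inv_mulVec_le_of_coercive {A H : Matrix n n ℝ} (hA : A.PosDef)
    (hH : H.PosDef) {c : ℝ} (hc : 0 < c) (coer : ∀ v, c * (v ⬝ᵥ H *ᵥ v) ≤ v ⬝ᵥ A *ᵥ v)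
    (P : Matrix n n ℝ) (w : n → ℂ) :
    complexQuadForm A⁻¹ (P.map (fun x : ℝ => (x : ℂ)) *ᵥ w)
      ≤ (‖(CFC.sqrt H)⁻¹ * P * (CFC.sqrt H)⁻¹‖ / c) ^ 2 * complexQuadForm A w := by
  simp only [complexQuadForm, re_mulVec_map_ofReal, im_mulVec_map_ofReal, mul_add]
  exact add_le_add (dotProduct_inv_mulVec_le_of_coercive hA hH hc coer P _)
    (dotProduct_inv_mulVec_le_of_coercive hA hH hc coer P _)

theorem complexQuadForm_mul_diagonal_mul_transpose (U : Matrix n n ℝ) (g : n → ℝ) (w : n → ℂ) :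
    complexQuadForm (U * diagonal g * Uᵀ) w
      = ∑ i, g i * ‖(Uᵀ.map (fun x : ℝ => (x : ℂ)) *ᵥ w) i‖ ^ 2 := by
  simp only [complexQuadForm, dotProduct_mulVec_mul_diagonal_mul_transpose,
    ← Finset.sum_add_distrib, Complex.sq_norm, Complex.normSq_apply, re_mulVec_map_ofReal,
    im_mulVec_map_ofReal]
  congr 1; funext i; ring

theorem inv_mul_diagonal_mul_transpose {U : Matrix n n ℝ} (hU : Uᵀ * U = 1) (hU' : U * Uᵀ = 1)
    {d : n → ℝ} (hd : ∀ i, d i ≠ 0) : (U * diagonal d * Uᵀ)⁻¹ = U * diagonal d⁻¹ * Uᵀ := by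
  refine inv_eq_left_inv ?_
  have hdd : diagonal d⁻¹ * diagonal d = 1 := by
    rw [diagonal_mul_diagonal, ← diagonal_one]
    exact congrArg diagonal (funext fun i => inv_mul_cancel₀ (hd i))
  calc U * diagonal d⁻¹ * Uᵀ * (U * diagonal d * Uᵀ)
      = U * (diagonal d⁻¹ * (Uᵀ * U) * diagonal d) * Uᵀ := by simp only [Matrix.mul_assoc]
    _ = 1 := by rw [hU, Matrix.mul_one, hdd, Matrix.mul_one, hU']

theorem IsHermitian.eq_eigenvectorUnitary_mul_diagonal_mul_transpose {A : Matrix n n ℝ}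
    (hA : A.IsHermitian) :
    A = (hA.eigenvectorUnitary : Matrix n n ℝ) * diagonal hA.eigenvalues
      * (hA.eigenvectorUnitary : Matrix n n ℝ)ᵀ := by
  simpa [Matrix.star_eq_conjTranspose] using hA.spectral_theorem

theorem IsHermitian.transpose_eigenvectorUnitary_mul_self {A : Matrix n n ℝ}
    (hA : A.IsHermitian) :
    (hA.eigenvectorUnitary : Matrix n n ℝ)ᵀ * hA.eigenvectorUnitary = 1 := by
  simpa [Matrix.star_eq_conjTranspose] using Unitary.coe_star_mul_self hA.eigenvectorUnitary

theorem IsHermitian.eigenvectorUnitary_mul_transpose_self {A : Matrix n n ℝ}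
    (hA : A.IsHermitian) :
    (hA.eigenvectorUnitary : Matrix n n ℝ) * (hA.eigenvectorUnitary : Matrix n n ℝ)ᵀ = 1 := by
  simpa [Matrix.star_eq_conjTranspose] using Unitary.coe_mul_star_self hA.eigenvectorUnitary

theorem mulVec_map_ofReal_sub_mulVec_eq {A As U : Matrix n n ℝ} {d : n → ℝ}
    (hAU : U * A = diagonal d * U) {μ : ℂ} {w : n → ℂ}
    (hw : As.map (fun x : ℝ => (x : ℂ)) *ᵥ w = μ • w) :
    U.map (fun x : ℝ => (x : ℂ)) *ᵥ ((A - As).map (fun x : ℝ => (x : ℂ)) *ᵥ w)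
      = fun i => (d i - μ) * (U.map (fun x : ℝ => (x : ℂ)) *ᵥ w) i := by
  have hmap : U.map (fun x : ℝ => (x : ℂ)) * A.map (fun x : ℝ => (x : ℂ))
      = diagonal (fun i => (d i : ℂ)) * U.map (fun x : ℝ => (x : ℂ)) := by
    rw [← map_ofReal_mul, hAU, map_ofReal_mul]
    simp
  rw [Matrix.map_sub _ (fun a b => Complex.ofReal_sub a b), sub_mulVec, hw, mulVec_sub,
    mulVec_smul, mulVec_mulVec, hmap]
  ext i
  simp [← mulVec_mulVec, mulVec_diagonal, sub_mul]

theorem exists_mulVec_eq_smul_of_mem_spectrum {K : Type*} [Field K] {M : Matrix n n K} {μ : K}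
    (h : μ ∈ spectrum K M) : ∃ w ≠ 0, M *ᵥ w = μ • w := by
  obtain ⟨w, hw⟩ := (Module.End.hasEigenvalue_iff_mem_spectrum (f := M.toLin')).mpr
    (by rwa [spectrum_toLin']) |>.exists_hasEigenvector
  exact ⟨w, hw.2, by simpa using hw.apply_eq_smul⟩

theorem exists_mem_spectrum_norm_sub_div_le {A H As : Matrix n n ℝ} (hA : A.PosDef)
    (hH : H.PosDef) {c : ℝ} (hc : 0 < c) (coer : ∀ v, c * (v ⬝ᵥ H *ᵥ v) ≤ v ⬝ᵥ A *ᵥ v) {μ : ℂ}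
    (hμ : μ ∈ spectrum ℂ (As.map (fun x : ℝ => (x : ℂ)))) :
    ∃ l ∈ spectrum ℝ A,
      ‖(l : ℂ) - μ‖ / l ≤ ‖(CFC.sqrt H)⁻¹ * (A - As) * (CFC.sqrt H)⁻¹‖ / c := by
  set δ := ‖(CFC.sqrt H)⁻¹ * (A - As) * (CFC.sqrt H)⁻¹‖ / c
  set U := (hA.1.eigenvectorUnitary : Matrix n n ℝ)
  set d := hA.1.eigenvalues
  have hd : ∀ i, 0 < d i := hA.eigenvalues_pos
  have hAeq : A = U * diagonal d * Uᵀ := hA.1.eq_eigenvectorUnitary_mul_diagonal_mul_transpose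
  have hU : Uᵀ * U = 1 := hA.1.transpose_eigenvectorUnitary_mul_self
  have hU' : U * Uᵀ = 1 := hA.1.eigenvectorUnitary_mul_transpose_self
  by_contra! hfar
  have hfar' (i : n) : δ * d i < ‖(d i : ℂ) - μ‖ :=
    (lt_div_iff₀ (hd i)).mp (hfar _ (hA.1.eigenvalues_mem_spectrum_real i))
  obtain ⟨w, hw0, hw⟩ := exists_mulVec_eq_smul_of_mem_spectrum hμ
  set y := Uᵀ.map (fun x : ℝ => (x : ℂ)) *ᵥ w
  have hy : y ≠ 0 := by
    intro hy0
    apply hw0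
    calc w = (U * Uᵀ).map (fun x : ℝ => (x : ℂ)) *ᵥ w := by simp [hU']
      _ = U.map (fun x : ℝ => (x : ℂ)) *ᵥ y := by
        rw [map_ofReal_mul, ← mulVec_mulVec]
      _ = 0 := by rw [hy0, mulVec_zero]
  have hres := mulVec_map_ofReal_sub_mulVec_eq (A := A) (U := Uᵀ) (d := d) (by
    rw [hAeq, ← Matrix.mul_assoc, ← Matrix.mul_assoc, hU, Matrix.one_mul]) hw
  have hQA : complexQuadForm A w = ∑ i, d i * ‖y i‖ ^ 2 := by
    rw [hAeq]; exact complexQuadForm_mul_diagonal_mul_transpose U d w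
  have hQAinv (r : n → ℂ) : complexQuadForm A⁻¹ r
      = ∑ i, (d i)⁻¹ * ‖(Uᵀ.map (fun x : ℝ => (x : ℂ)) *ᵥ r) i‖ ^ 2 := by
    rw [hAeq, inv_mul_diagonal_mul_transpose hU hU' fun i => (hd i).ne']
    exact complexQuadForm_mul_diagonal_mul_transpose U d⁻¹ r
  have hle := complexQuadForm_inv_mulVec_le_of_coercive hA hH hc coer (A - As) w
  rw [hQAinv, hres, hQA] at hle
  exact (sq_mul_sum_lt_sum_inv_mul hd (by positivity) hfar' hy).not_ge hle

noncomputable def relSpectralDist (A As : Matrix n n ℝ) : ℝ :=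
  sSup ((fun μ : ℂ => sInf ((fun l : ℝ => ‖(l : ℂ) - μ‖ / l) '' spectrum ℝ A)) ''
    spectrum ℂ (As.map (fun x : ℝ => (x : ℂ))))

theorem PosDef.norm_sub_div_nonneg_of_mem_image {A : Matrix n n ℝ} (hA : A.PosDef) {μ : ℂ} :
    ∀ x ∈ (fun l : ℝ => ‖(l : ℂ) - μ‖ / l) '' spectrum ℝ A, 0 ≤ x := by
  rintro _ ⟨l, hl, rfl⟩
  exact div_nonneg (norm_nonneg _) (hA.isStrictlyPositive.spectrum_pos hl).le

theorem relSpectralDist_nonneg {A : Matrix n n ℝ} (hA : A.PosDef) (As : Matrix n n ℝ) :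
    0 ≤ relSpectralDist A As :=
  Real.sSup_nonneg <| by
    rintro _ ⟨μ, -, rfl⟩
    exact Real.sInf_nonneg hA.norm_sub_div_nonneg_of_mem_image

theorem relSpectralDist_le {A As : Matrix n n ℝ} (hA : A.PosDef) {δ : ℝ} (hδ : 0 ≤ δ)
    (h : ∀ μ ∈ spectrum ℂ (As.map (fun x : ℝ => (x : ℂ))),
      ∃ l ∈ spectrum ℝ A, ‖(l : ℂ) - μ‖ / l ≤ δ) :
    relSpectralDist A As ≤ δ := by
  refine Real.sSup_le ?_ hδ
  rintro _ ⟨μ, hμ, rfl⟩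
  obtain ⟨l, hl, hle⟩ := h μ hμ
  exact (csInf_le ⟨0, hA.norm_sub_div_nonneg_of_mem_image⟩ ⟨l, hl, rfl⟩).trans hle

end Matrix

theorem relative_spectral_convergence_general
    (N : ℕ → ℕ)
    (H A Astar : ∀ k, Matrix (Fin (N k)) (Fin (N k)) ℝ)
    (hH : ∀ k, (H k).PosDef) (hA : ∀ k, (A k).PosDef)
    (c : ℝ) (hc : 0 < c)
    (coer : ∀ k (v : Fin (N k) → ℝ),
      c * (v ⬝ᵥ (H k).mulVec v) ≤ v ⬝ᵥ (A k).mulVec v)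
    (hconv : Tendsto (fun k =>
        ‖(CFC.sqrt (H k))⁻¹ * (A k - Astar k) * (CFC.sqrt (H k))⁻¹‖)
      atTop (nhds 0)) :
    Tendsto (fun k =>
      sSup ((fun μ : ℂ =>
          sInf ((fun l : ℝ => ‖(l : ℂ) - μ‖ / l) '' spectrum ℝ (A k))) ''
        spectrum ℂ ((Astar k).map (fun x : ℝ => (x : ℂ))))) atTop (nhds 0) := by
  change Tendsto (fun k => relSpectralDist (A k) (Astar k)) atTop (nhds 0)
  refine squeeze_zero (fun k => relSpectralDist_nonneg (hA k) (Astar k)) (fun k => ?_)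
    (by simpa using hconv.div_const c)
  exact relSpectralDist_le (hA k) (by positivity) fun μ hμ =>
    exists_mem_spectrum_norm_sub_div_le (hA k) (hH k) hc (coer k) hμ

/-- Proposition 1 of the paper, in matrix form. For a sequence of symmetric positive
definite matrices `A k` (stiffness), `H k` (Gram matrix of the `H¹` norm), and arbitrary
approximations `Astar k`, uniform coercivity plus convergence of the normalized
perturbation `H^{-1/2}(A - A*)H^{-1/2}` to zero imply that the relative distance from the
complex spectrum of `A*` to the (real, positive) spectrum of `A` tends to zero. -/
theorem relative_spectral_convergence
    (N : ℕ → ℕ) (hN : ∀ k, 0 < N k)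
    (H A Astar : ∀ k, Matrix (Fin (N k)) (Fin (N k)) ℝ)
    (hH : ∀ k, (H k).PosDef) (hA : ∀ k, (A k).PosDef)
    (c : ℝ) (hc : 0 < c)
    (coer : ∀ k (v : Fin (N k) → ℝ),
      c * (v ⬝ᵥ (H k).mulVec v) ≤ v ⬝ᵥ (A k).mulVec v)
    (hconv : Tendsto (fun k =>
        ‖(CFC.sqrt (H k))⁻¹ * (A k - Astar k) * (CFC.sqrt (H k))⁻¹‖)
      atTop (nhds 0)) :
    Tendsto (fun k =>
      sSup ((fun μ : ℂ =>
          sInf ((fun l : ℝ => ‖(l : ℂ) - μ‖ / l) '' spectrum ℝ (A k))) ''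
        spectrum ℂ ((Astar k).map (fun x : ℝ => (x : ℂ))))) atTop (nhds 0) :=
  relative_spectral_convergence_general N H A Astar hH hA c hc coer hconv
end

section
/- Let (N_k) be a sequence of positive integers. For each k, let H_k, A_k and P_k be real symmetric positive definite N_k × N_k matrices and let A*_k be an arbitrary real N_k × N_k matrix. Assume: (i) there exists c > 0, independent of k, with vᵀ A_k v ≥ c · vᵀ H_k v for every v ∈ ℝ^{N_k}; (ii) there exist constants 0 < δ ≤ Δ, independent of k, such that every eigenvalue of P_k⁻¹ A_k lies in the interval [δ, Δ]; (iii) ‖H_k^{-1/2} (A_k − A*_k) H_k^{-1/2}‖ → 0 as k → ∞. Then sup over μ in the complex spectrum of P_k⁻¹ A*_k of inf over λ in the (real) spectrum of P_k⁻¹ A_k of |λ − μ| tends to 0 as k → ∞. -/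
open scoped Matrix.Norms.L2Operator
open Matrix Filter

/-!
With `S = P^{1/2}` and `T = H^{1/2}`, the matrices `P⁻¹A` and `P⁻¹A*` are similar to the
symmetric matrix `B = S⁻¹AS⁻¹` and to `B + E`, where `E = -S⁻¹(A - A*)S⁻¹`. For a normal
element `b` of a C⋆-algebra, `‖(b - μ)⁻¹‖` is the reciprocal of the distance from `μ` to the
spectrum of `b`, so every eigenvalue of `B + E` lies within `‖E‖` of the spectrum of `B`
(Bauer–Fike).
Finally `E = -(TS⁻¹)ᵀ (T⁻¹(A - A*)T⁻¹) (TS⁻¹)`, and coercivity together with `σ(B) ≤ Δ` gives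
`‖TS⁻¹‖² ≤ Δ / c`, so `‖E‖ ≤ (Δ / c) ‖T⁻¹(A - A*)T⁻¹‖ → 0`.
-/

theorem exists_mem_spectrum_norm_sub_le_of_mem_spectrum_add {A : Type*} [CStarAlgebra A]
    (a e : A) [IsStarNormal a] {μ : ℂ} (hμ : μ ∈ spectrum ℂ (a + e)) :
    ∃ ν ∈ spectrum ℂ a, ‖ν - μ‖ ≤ ‖e‖ := by
  obtain _ | _ := subsingleton_or_nontrivial A
  · simp [spectrum.of_subsingleton] at hμ
  by_contra! hfar
  have hne : ∀ ν ∈ spectrum ℂ a, ν - μ ≠ 0 := fun ν hν h =>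
    (norm_nonneg e).not_gt (by simpa [h] using hfar ν hν)
  have he : 0 < ‖e‖ := norm_pos_iff.mpr <| by
    rintro rfl
    exact hne μ (by simpa using hμ) (sub_self μ)
  let u : Aˣ := cfcUnits (fun ν => ν - μ) a hne
  have hu : (u : A) = a - algebraMap ℂ A μ := by
    change cfc (fun ν => ν - μ) a = _
    rw [cfc_sub (fun ν : ℂ => ν) (fun _ => μ) a, cfc_id' ℂ a, cfc_const μ a]
  have hinv : ‖(↑u⁻¹ : A)‖ < ‖e‖⁻¹ := by
    refine norm_cfc_lt (inv_pos.mpr he) fun ν hν => ?_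
    rw [norm_inv]
    exact inv_strictAnti₀ he (hfar ν hν)
  have hsmall : ‖e‖ < ‖(↑u⁻¹ : A)‖⁻¹ := (lt_inv_comm₀ (Units.norm_pos _) he).mp hinv
  refine spectrum.mem_iff.mp hμ ?_
  have := (u.add e hsmall).isUnit.neg
  rwa [Units.val_add, hu, neg_add, neg_sub, ← sub_eq_add_neg, sub_sub] at this

theorem spectrum.map_units_conjugate' {R A B : Type*} [CommSemiring R] [Monoid A] [Ring B]
    [Algebra R B] (φ : A →* B) (u : Aˣ) (a : A) :
    spectrum R (φ (↑u⁻¹ * a * ↑u)) = spectrum R (φ a) := by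
  simpa using spectrum.units_conjugate' (R := R) (a := φ a) (u := Units.map φ u)

theorem EuclideanSpace.real_norm_sq_eq_dotProduct {n : Type*} [Fintype n]
    (x : EuclideanSpace ℝ n) : ‖x‖ ^ 2 = x.ofLp ⬝ᵥ x.ofLp := by
  rw [← real_inner_self_eq_norm_sq, EuclideanSpace.inner_eq_star_dotProduct, star_trivial]

theorem EuclideanSpace.norm_sq_eq_norm_sq_re_add_norm_sq_im {n : Type*} [Fintype n]
    (y : EuclideanSpace ℂ n) :
    ‖y‖ ^ 2 =
      ‖WithLp.toLp 2 (fun i => (y i).re)‖ ^ 2 + ‖WithLp.toLp 2 (fun i => (y i).im)‖ ^ 2 := by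
  simp only [EuclideanSpace.norm_sq_eq, ← Finset.sum_add_distrib, Complex.sq_norm,
    Complex.normSq_apply, Real.norm_eq_abs, sq_abs, ← sq]

namespace Matrix

variable {n : Type*} [Fintype n]

theorem map_ofReal_mulVec (M : Matrix n n ℝ) (x : n → ℂ) (i : n) :
    (M.map (fun x : ℝ => (x : ℂ)) *ᵥ x) i =
      ⟨(M *ᵥ fun j => (x j).re) i, (M *ᵥ fun j => (x j).im) i⟩ := by
  apply Complex.ext <;> simp [mulVec, dotProduct, Complex.re_sum, Complex.im_sum]

theorem IsHermitian.mulVec_dotProduct {M : Matrix n n ℝ} (hM : M.IsHermitian) (x y : n → ℝ) :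
    M *ᵥ x ⬝ᵥ y = x ⬝ᵥ M *ᵥ y := by
  rw [dotProduct_comm, ← dotProduct_transpose_mulVec, ← conjTranspose_eq_transpose_of_trivial,
    hM.eq]

variable [DecidableEq n]

theorem mem_spectrum_map_ofReal_iff (M : Matrix n n ℝ) (x : ℝ) :
    (x : ℂ) ∈ spectrum ℂ (M.map (fun x : ℝ => (x : ℂ))) ↔ x ∈ spectrum ℝ M := by
  rw [mem_spectrum_iff_isRoot_charpoly, mem_spectrum_iff_isRoot_charpoly,
    ← Polynomial.isRoot_map_iff (f := Complex.ofRealHom) Complex.ofReal_injective, ← charpoly_map]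
  rfl

theorem l2_opNorm_map_ofReal_le (M : Matrix n n ℝ) :
    ‖M.map (fun x : ℝ => (x : ℂ))‖ ≤ ‖M‖ := by
  rw [← l2_opNorm_toEuclideanCLM]
  refine ContinuousLinearMap.opNorm_le_bound _ (norm_nonneg M) fun x => ?_
  refine le_of_sq_le_sq ?_ (by positivity)
  rw [mul_pow, EuclideanSpace.norm_sq_eq_norm_sq_re_add_norm_sq_im,
    EuclideanSpace.norm_sq_eq_norm_sq_re_add_norm_sq_im x, mul_add, ← mul_pow, ← mul_pow]
  simp only [ofLp_toEuclideanCLM, map_ofReal_mulVec]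
  gcongr <;> exact M.l2_opNorm_mulVec (WithLp.toLp 2 _)

theorem l2_opNorm_le_sqrt_of_dotProduct_le (M : Matrix n n ℝ) {C : ℝ}
    (h : ∀ x, M *ᵥ x ⬝ᵥ M *ᵥ x ≤ C * (x ⬝ᵥ x)) : ‖M‖ ≤ √C := by
  rw [← l2_opNorm_toEuclideanCLM]
  refine ContinuousLinearMap.opNorm_le_bound _ (Real.sqrt_nonneg C) fun x => ?_
  calc _ = √(‖toEuclideanCLM (𝕜 := ℝ) M x‖ ^ 2) := (Real.sqrt_sq (norm_nonneg _)).symm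
    _ ≤ √(C * ‖x‖ ^ 2) := Real.sqrt_le_sqrt <| by
        simpa only [EuclideanSpace.real_norm_sq_eq_dotProduct, ofLp_toEuclideanCLM] using h x.ofLp
    _ = √C * ‖x‖ := by rw [Real.sqrt_mul' _ (sq_nonneg _), Real.sqrt_sq (norm_nonneg _)]

open scoped MatrixOrder in
theorem IsHermitian.dotProduct_mulVec_le {B : Matrix n n ℝ} (hB : B.IsHermitian) {Δ : ℝ}
    (h : ∀ x ∈ spectrum ℝ B, x ≤ Δ) (v : n → ℝ) : v ⬝ᵥ B *ᵥ v ≤ Δ * (v ⬝ᵥ v) := by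
  have hle : B ≤ algebraMap ℝ (Matrix n n ℝ) Δ := le_algebraMap_of_spectrum_le h hB.isSelfAdjoint
  simpa [sub_mulVec, Algebra.algebraMap_eq_smul_one, smul_mulVec, dotProduct_sub]
    using (le_iff.mp hle).dotProduct_mulVec_nonneg v

open scoped MatrixOrder in
theorem PosSemidef.cfc_sqrt_eq {M : Matrix n n ℝ} (hM : M.PosSemidef) :
    hM.isHermitian.cfc Real.sqrt = CFC.sqrt M := by
  rw [← hM.isHermitian.cfc_eq, CFC.sqrt_eq_real_sqrt M hM.nonneg, cfcₙ_eq_cfc]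

theorem IsHermitian.inv_mul_mul_inv {S A : Matrix n n ℝ} (hS : S.IsHermitian) (hA : A.IsHermitian) :
    (S⁻¹ * A * S⁻¹).IsHermitian := by
  simpa only [hS.inv.eq] using isHermitian_mul_mul_conjTranspose S⁻¹ hA

theorem l2_opNorm_conjTranspose_mul_mul_le (M X : Matrix n n ℝ) :
    ‖Mᴴ * X * M‖ ≤ ‖M‖ ^ 2 * ‖X‖ :=
  calc ‖Mᴴ * X * M‖ ≤ ‖Mᴴ‖ * ‖X‖ * ‖M‖ :=
        (l2_opNorm_mul _ _).trans (mul_le_mul_of_nonneg_right (l2_opNorm_mul _ _) (norm_nonneg _))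
    _ = ‖M‖ ^ 2 * ‖X‖ := by rw [l2_opNorm_conjTranspose]; ring

theorem mul_self_inv_mul_eq {S : Matrix n n ℝ} (hS : IsUnit S) (X : Matrix n n ℝ) :
    (S * S)⁻¹ * X = S⁻¹ * (S⁻¹ * X * S⁻¹) * S := by
  simp only [mul_inv_rev, mul_assoc, nonsing_inv_mul S ((isUnit_iff_isUnit_det S).mp hS), mul_one]

theorem spectrum_mul_self_inv_mul {S : Matrix n n ℝ} (hS : IsUnit S) (X : Matrix n n ℝ) :
    spectrum ℝ ((S * S)⁻¹ * X) = spectrum ℝ (S⁻¹ * X * S⁻¹) := by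
  obtain ⟨u, rfl⟩ := hS
  rw [mul_self_inv_mul_eq u.isUnit, ← coe_units_inv]
  exact spectrum.units_conjugate'

theorem spectrum_map_ofReal_mul_self_inv_mul {S : Matrix n n ℝ} (hS : IsUnit S)
    (X : Matrix n n ℝ) :
    spectrum ℂ (((S * S)⁻¹ * X).map (fun x : ℝ => (x : ℂ))) =
      spectrum ℂ ((S⁻¹ * X * S⁻¹).map (fun x : ℝ => (x : ℂ))) := by
  obtain ⟨u, rfl⟩ := hS
  rw [mul_self_inv_mul_eq u.isUnit, ← coe_units_inv]
  exact spectrum.map_units_conjugate' (R := ℂ)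
    (Complex.ofRealHom.mapMatrix : _ →+* _).toMonoidHom u _

theorem exists_mem_spectrum_norm_sub_le_of_mul_self_eq {P A A' S : Matrix n n ℝ}
    (hA : A.IsHermitian) (hS : S.IsHermitian) (hSu : IsUnit S) (hSP : S * S = P) {μ : ℂ}
    (hμ : μ ∈ spectrum ℂ ((P⁻¹ * A').map (fun x : ℝ => (x : ℂ)))) :
    ∃ l ∈ spectrum ℝ (P⁻¹ * A), ‖(l : ℂ) - μ‖ ≤ ‖S⁻¹ * (A - A') * S⁻¹‖ := by
  subst hSP
  set B := S⁻¹ * A * S⁻¹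
  set E := -(S⁻¹ * (A - A') * S⁻¹)
  have hB : (B.map (fun x : ℝ => (x : ℂ))).IsHermitian :=
    (hS.inv_mul_mul_inv hA).map _ fun _ => by simp
  have : IsStarNormal (B.map (fun x : ℝ => (x : ℂ))) := hB.isSelfAdjoint.isStarNormal
  have hBE : S⁻¹ * A' * S⁻¹ = B + E := by
    simp only [B, E, mul_sub, sub_mul, neg_sub, add_sub_cancel]
  rw [spectrum_map_ofReal_mul_self_inv_mul hSu, hBE, Matrix.map_add _ Complex.ofReal_add] at hμ
  obtain ⟨ν, hν, hνμ⟩ := exists_mem_spectrum_norm_sub_le_of_mem_spectrum_add _ _ hμ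
  have hνre : ((ν.re : ℝ) : ℂ) = ν := (hB.isSelfAdjoint.mem_spectrum_eq_re hν).symm
  refine ⟨ν.re, ?_, ?_⟩
  · rw [spectrum_mul_self_inv_mul hSu, ← mem_spectrum_map_ofReal_iff, hνre]
    exact hν
  · rw [hνre, ← norm_neg (S⁻¹ * _ * _)]
    exact hνμ.trans (l2_opNorm_map_ofReal_le E)

theorem l2_opNorm_mul_inv_le_sqrt {H A S T : Matrix n n ℝ} (hT : T.IsHermitian) (hTH : T * T = H)
    (hS : S.IsHermitian) {c Δ : ℝ} (hc : 0 < c)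
    (hcoer : ∀ v, c * (v ⬝ᵥ H *ᵥ v) ≤ v ⬝ᵥ A *ᵥ v)
    (hB : ∀ v, v ⬝ᵥ (S⁻¹ * A * S⁻¹) *ᵥ v ≤ Δ * (v ⬝ᵥ v)) :
    ‖T * S⁻¹‖ ≤ √(Δ / c) := by
  refine l2_opNorm_le_sqrt_of_dotProduct_le _ fun x => ?_
  set y := S⁻¹ *ᵥ x
  have hH : (T * S⁻¹) *ᵥ x ⬝ᵥ (T * S⁻¹) *ᵥ x = y ⬝ᵥ H *ᵥ y := by
    rw [← mulVec_mulVec, hT.mulVec_dotProduct, ← hTH, mulVec_mulVec]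
  have hA : y ⬝ᵥ A *ᵥ y = x ⬝ᵥ (S⁻¹ * A * S⁻¹) *ᵥ x := by
    rw [hS.inv.mulVec_dotProduct, mulVec_mulVec, mulVec_mulVec]
  rw [hH, div_mul_eq_mul_div, le_div_iff₀ hc, mul_comm]
  exact (hcoer y).trans (hA ▸ hB x)

open scoped MatrixOrder in
theorem PosDef.exists_mem_spectrum_inv_mul_norm_sub_le {H A P A' : Matrix n n ℝ} (hH : H.PosDef)
    (hA : A.IsHermitian) (hP : P.PosDef) {c Δ : ℝ} (hc : 0 < c) (hΔ : 0 ≤ Δ)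
    (hcoer : ∀ v, c * (v ⬝ᵥ H *ᵥ v) ≤ v ⬝ᵥ A *ᵥ v) (hspec : ∀ x ∈ spectrum ℝ (P⁻¹ * A), x ≤ Δ)
    {μ : ℂ} (hμ : μ ∈ spectrum ℂ ((P⁻¹ * A').map (fun x : ℝ => (x : ℂ)))) :
    ∃ l ∈ spectrum ℝ (P⁻¹ * A), ‖(l : ℂ) - μ‖ ≤
      Δ / c * ‖(CFC.sqrt H)⁻¹ * (A - A') * (CFC.sqrt H)⁻¹‖ := by
  set S := CFC.sqrt P
  set T := CFC.sqrt H
  have hS : S.IsHermitian := (CFC.sqrt_nonneg P).posSemidef.isHermitian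
  have hT : T.IsHermitian := (CFC.sqrt_nonneg H).posSemidef.isHermitian
  have hSu : IsUnit S := IsStrictlyPositive.isUnit_cfcSqrt P hP.isStrictlyPositive
  have hTu : IsUnit T := IsStrictlyPositive.isUnit_cfcSqrt H hH.isStrictlyPositive
  have hSP : S * S = P := CFC.sqrt_mul_sqrt_self P hP.posSemidef.nonneg
  have hTH : T * T = H := CFC.sqrt_mul_sqrt_self H hH.posSemidef.nonneg
  have hB := (hS.inv_mul_mul_inv hA).dotProduct_mulVec_le
    (by rwa [← spectrum_mul_self_inv_mul hSu, hSP])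
  have hTS := l2_opNorm_mul_inv_le_sqrt hT hTH hS hc hcoer hB
  obtain ⟨l, hl, hle⟩ := exists_mem_spectrum_norm_sub_le_of_mul_self_eq (A' := A') hA hS hSu hSP hμ
  refine ⟨l, hl, hle.trans ?_⟩
  have hconj : S⁻¹ * (A - A') * S⁻¹ = (T * S⁻¹)ᴴ * (T⁻¹ * (A - A') * T⁻¹) * (T * S⁻¹) := by
    have hTdet := (isUnit_iff_isUnit_det T).mp hTu
    simp only [conjTranspose_mul, hS.inv.eq, hT.eq, mul_assoc,
      mul_nonsing_inv_cancel_left _ _ hTdet, nonsing_inv_mul_cancel_left _ _ hTdet]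
  calc _ ≤ ‖T * S⁻¹‖ ^ 2 * ‖T⁻¹ * (A - A') * T⁻¹‖ :=
        hconj ▸ l2_opNorm_conjTranspose_mul_mul_le _ _
    _ ≤ Δ / c * ‖T⁻¹ * (A - A') * T⁻¹‖ := by
        gcongr
        calc ‖T * S⁻¹‖ ^ 2 ≤ √(Δ / c) ^ 2 := pow_le_pow_left₀ (norm_nonneg _) hTS 2
          _ = Δ / c := Real.sq_sqrt (by positivity)

end Matrix

theorem sSup_image_sInf_image_nonneg {α β : Type*} {d : α → β → ℝ} (hd : ∀ a b, 0 ≤ d a b)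
    (M : Set α) (L : Set β) : 0 ≤ sSup ((fun a => sInf (d a '' L)) '' M) :=
  Real.sSup_nonneg <| Set.forall_mem_image.mpr fun a _ =>
    Real.sInf_nonneg <| Set.forall_mem_image.mpr fun b _ => hd a b

theorem sSup_image_sInf_image_le {α β : Type*} {d : α → β → ℝ} (hd : ∀ a b, 0 ≤ d a b)
    {M : Set α} {L : Set β} {r : ℝ} (hr : 0 ≤ r) (h : ∀ a ∈ M, ∃ b ∈ L, d a b ≤ r) :
    sSup ((fun a => sInf (d a '' L)) '' M) ≤ r :=
  Real.sSup_le (Set.forall_mem_image.mpr fun a ha => by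
    obtain ⟨b, hb, hbr⟩ := h a ha
    exact (csInf_le ⟨0, Set.forall_mem_image.mpr fun b _ => hd a b⟩ ⟨b, hb, rfl⟩).trans hbr) hr

theorem preconditioned_spectral_convergence_general
    (N : ℕ → ℕ)
    (H A P Astar : ∀ k, Matrix (Fin (N k)) (Fin (N k)) ℝ)
    (hH : ∀ k, (H k).PosDef) (hA : ∀ k, (A k).PosDef) (hP : ∀ k, (P k).PosDef)
    (c : ℝ) (hc : 0 < c)
    (coer : ∀ k (v : Fin (N k) → ℝ),
      c * (v ⬝ᵥ (H k).mulVec v) ≤ v ⬝ᵥ (A k).mulVec v)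
    (δ Δ : ℝ) (hδ : 0 < δ) (hδΔ : δ ≤ Δ)
    (heig : ∀ k, spectrum ℂ (((P k)⁻¹ * A k).map (fun x : ℝ => (x : ℂ))) ⊆
      (fun x : ℝ => (x : ℂ)) '' Set.Icc δ Δ)
    (hconv : Tendsto (fun k =>
        ‖((hH k).isHermitian.cfc Real.sqrt)⁻¹ * (A k - Astar k) * ((hH k).isHermitian.cfc Real.sqrt)⁻¹‖)
      atTop (nhds 0)) :
    Tendsto (fun k =>
      sSup ((fun μ : ℂ =>
          sInf ((fun l : ℝ => ‖(l : ℂ) - μ‖) ''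
            spectrum ℝ ((P k)⁻¹ * A k))) ''
        spectrum ℂ (((P k)⁻¹ * Astar k).map (fun x : ℝ => (x : ℂ))))) atTop (nhds 0) := by
  have hΔ : 0 ≤ Δ := hδ.le.trans hδΔ
  have hspec : ∀ k, ∀ x ∈ spectrum ℝ ((P k)⁻¹ * A k), x ≤ Δ := fun k x hx => by
    obtain ⟨y, hy, hyx⟩ := heig k ((mem_spectrum_map_ofReal_iff _ x).mpr hx)
    exact Complex.ofReal_injective hyx ▸ hy.2
  simp only [fun k => (hH k).posSemidef.cfc_sqrt_eq] at hconv
  refine squeeze_zero (fun _ => sSup_image_sInf_image_nonneg (fun _ _ => norm_nonneg _) _ _)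
    (fun k => sSup_image_sInf_image_le (fun _ _ => norm_nonneg _) (by positivity) fun μ hμ =>
      PosDef.exists_mem_spectrum_inv_mul_norm_sub_le (hH k) (hA k).isHermitian (hP k) hc hΔ
        (coer k) (hspec k) hμ)
    (by simpa using hconv.const_mul (Δ / c))

/-- Proposition 2 of the paper, in matrix form. If `P k` is a uniformly robust symmetric
positive definite preconditioner for the symmetric positive definite matrices `A k`
(i.e. the eigenvalues of `Pₖ⁻¹Aₖ` lie in `[δ, Δ]` with `0 < δ ≤ Δ` independent of `k`),
the bilinear form of `A k` is uniformly coercive with respect to the norm represented by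
`H k`, and `‖Hₖ^{-1/2}(Aₖ - A*ₖ)Hₖ^{-1/2}‖ → 0`, then the distance from the complex
spectrum of `Pₖ⁻¹A*ₖ` to the (real) spectrum of `Pₖ⁻¹Aₖ` tends to zero. -/
theorem preconditioned_spectral_convergence
    (N : ℕ → ℕ) (hN : ∀ k, 0 < N k)
    (H A P Astar : ∀ k, Matrix (Fin (N k)) (Fin (N k)) ℝ)
    (hH : ∀ k, (H k).PosDef) (hA : ∀ k, (A k).PosDef) (hP : ∀ k, (P k).PosDef)
    (c : ℝ) (hc : 0 < c)
    (coer : ∀ k (v : Fin (N k) → ℝ),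
      c * (v ⬝ᵥ (H k).mulVec v) ≤ v ⬝ᵥ (A k).mulVec v)
    (δ Δ : ℝ) (hδ : 0 < δ) (hδΔ : δ ≤ Δ)
    (heig : ∀ k, spectrum ℂ (((P k)⁻¹ * A k).map (fun x : ℝ => (x : ℂ))) ⊆
      (fun x : ℝ => (x : ℂ)) '' Set.Icc δ Δ)
    (hconv : Tendsto (fun k =>
        ‖((hH k).isHermitian.cfc Real.sqrt)⁻¹ * (A k - Astar k) * ((hH k).isHermitian.cfc Real.sqrt)⁻¹‖)
      atTop (nhds 0)) :
    Tendsto (fun k =>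
      sSup ((fun μ : ℂ =>
          sInf ((fun l : ℝ => ‖(l : ℂ) - μ‖) ''
            spectrum ℝ ((P k)⁻¹ * A k))) ''
        spectrum ℂ (((P k)⁻¹ * Astar k).map (fun x : ℝ => (x : ℂ))))) atTop (nhds 0) :=
  preconditioned_spectral_convergence_general N H A P Astar hH hA hP c hc coer δ Δ hδ hδΔ heig hconv
end

section
/- Let H and A be real symmetric positive definite N × N matrices, let c > 0 be such that vᵀ A v ≥ c · vᵀ H v for every v ∈ ℝ^N, and let A* be any real N × N matrix. Then for every eigenvalue μ in the complex spectrum of A* there exists an eigenvalue λ > 0 of A such that |λ − μ| ≤ (λ / c) · ‖H^{-1/2} (A − A*) H^{-1/2}‖. -/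
/-!
Diagonalising `A` gives `R = U diag(λᵢ^{-1/2})` with `Rᵀ A R = 1` and `Rᵀ R = diag(1/λᵢ)`. For an
eigenvalue `μ` of `A*` the congruent matrix `Rᵀ (A* - μ) R = diag(1 - μ/λᵢ) - Rᵀ (A - A*) R` is
singular, so by the Bauer–Fike argument (a diagonal matrix minus a perturbation of norm smaller
than all its entries is invertible by a Neumann series) some `|1 - μ/λᵢ|` is at most
`‖Rᵀ (A - A*) R‖`. Writing `Rᵀ (A - A*) R = (H^{1/2} R)ᵀ (H^{-1/2} (A - A*) H^{-1/2}) (H^{1/2} R)`,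
coercivity `c H ≤ A` gives `‖H^{1/2} R‖² ≤ 1/c`, which bounds that norm by
`‖H^{-1/2} (A - A*) H^{-1/2}‖ / c`.
-/

open scoped Matrix.Norms.L2Operator MatrixOrder
open Matrix

variable {m n : Type*} [Fintype m] [Fintype n]

theorem EuclideanSpace.sq_norm_toLp_eq_dotProduct (v : n → ℝ) :
    ‖WithLp.toLp 2 v‖ ^ 2 = v ⬝ᵥ v := by
  rw [← real_inner_self_eq_norm_sq, EuclideanSpace.inner_eq_star_dotProduct, star_trivial]

theorem EuclideanSpace.sq_norm_eq_re_add_im (x : EuclideanSpace ℂ n) :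
    ‖x‖ ^ 2 = ‖WithLp.toLp 2 fun i => (x i).re‖ ^ 2 + ‖WithLp.toLp 2 fun i => (x i).im‖ ^ 2 := by
  simp only [EuclideanSpace.norm_sq_eq, ← Finset.sum_add_distrib]
  congr with i
  rw [Complex.sq_norm, Complex.normSq_apply, Real.norm_eq_abs, Real.norm_eq_abs, sq_abs, sq_abs,
    sq, sq]

theorem Matrix.mulVec_dotProduct_mulVec {R : Type*} [CommSemiring R] (P Q : Matrix m n R)
    (v w : n → R) : (P *ᵥ v) ⬝ᵥ (Q *ᵥ w) = v ⬝ᵥ ((Pᵀ * Q) *ᵥ w) := by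
  rw [dotProduct_mulVec, ← vecMul_transpose, vecMul_vecMul, dotProduct_mulVec]

theorem Matrix.l2_opNorm_map_ofReal_le_s3 [DecidableEq n] (M : Matrix m n ℝ) :
    ‖M.map ((↑) : ℝ → ℂ)‖ ≤ ‖M‖ := by
  refine ContinuousLinearMap.opNorm_le_bound _ (norm_nonneg M) fun x => ?_
  set re : EuclideanSpace ℝ n := WithLp.toLp 2 fun i => (x i).re
  set im : EuclideanSpace ℝ n := WithLp.toLp 2 fun i => (x i).im
  have hre : M *ᵥ re = fun i => (M.map ((↑) : ℝ → ℂ) *ᵥ x.ofLp) i |>.re := by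
    ext i; simp [mulVec, dotProduct, Complex.re_sum, re]
  have him : M *ᵥ im = fun i => (M.map ((↑) : ℝ → ℂ) *ᵥ x.ofLp) i |>.im := by
    ext i; simp [mulVec, dotProduct, Complex.im_sum, im]
  have hre_le := M.l2_opNorm_mulVec re
  have him_le := M.l2_opNorm_mulVec im
  rw [hre] at hre_le
  rw [him] at him_le
  refine le_of_sq_le_sq ?_ (by positivity)
  calc _ = _ := EuclideanSpace.sq_norm_eq_re_add_im _
    _ ≤ (‖M‖ * ‖re‖) ^ 2 + (‖M‖ * ‖im‖) ^ 2 := by gcongr; exacts [hre_le, him_le]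
    _ = (‖M‖ * ‖x‖) ^ 2 := by
      rw [mul_pow, mul_pow, mul_pow, EuclideanSpace.sq_norm_eq_re_add_im x]; ring

theorem Matrix.sq_l2_opNorm_le_of_forall_dotProduct_le [DecidableEq n] {M : Matrix m n ℝ}
    {C : ℝ} (hC : 0 ≤ C) (h : ∀ v, (M *ᵥ v) ⬝ᵥ (M *ᵥ v) ≤ C * (v ⬝ᵥ v)) : ‖M‖ ^ 2 ≤ C := by
  refine (Real.le_sqrt (norm_nonneg M) hC).mp ?_
  refine ContinuousLinearMap.opNorm_le_bound _ (Real.sqrt_nonneg C) fun x => ?_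
  refine le_of_sq_le_sq ?_ (by positivity)
  rw [mul_pow, Real.sq_sqrt hC]
  have hx := h x.ofLp
  rwa [← EuclideanSpace.sq_norm_toLp_eq_dotProduct,
    ← EuclideanSpace.sq_norm_toLp_eq_dotProduct] at hx

theorem Matrix.l2_opNorm_transpose_mul_mul_self_le [DecidableEq m] [DecidableEq n]
    (P : Matrix m n ℝ) (B : Matrix m m ℝ) : ‖Pᵀ * B * P‖ ≤ ‖P‖ ^ 2 * ‖B‖ := calc
  ‖Pᵀ * B * P‖ ≤ ‖Pᵀ‖ * ‖B‖ * ‖P‖ :=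
    (l2_opNorm_mul _ _).trans (by gcongr; exact l2_opNorm_mul _ _)
  _ = ‖P‖ ^ 2 * ‖B‖ := by
    rw [← conjTranspose_eq_transpose_of_trivial, l2_opNorm_conjTranspose]; ring

section Square

variable [DecidableEq n]

theorem Matrix.exists_norm_le_of_not_isUnit_diagonal_sub {𝕜 : Type*} [RCLike 𝕜] {d : n → 𝕜}
    {F : Matrix n n 𝕜} (h : ¬IsUnit (diagonal d - F)) : ∃ i, ‖d i‖ ≤ ‖F‖ := by
  by_contra! hd
  have hd0 : ∀ i, d i ≠ 0 := fun i => norm_pos_iff.mp ((norm_nonneg F).trans_lt (hd i))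
  have hdd : diagonal d * diagonal d⁻¹ = 1 := by
    rw [diagonal_mul_diagonal, ← diagonal_one]
    exact congrArg diagonal (funext fun i => mul_inv_cancel₀ (hd0 i))
  rcases eq_or_ne F 0 with rfl | hF
  · exact h (by simpa using IsUnit.of_mul_eq_one _ hdd)
  have hsmall : ‖diagonal d⁻¹ * F‖ < 1 := calc
    ‖diagonal d⁻¹ * F‖ ≤ ‖d⁻¹‖ * ‖F‖ := (l2_opNorm_mul _ _).trans_eq (by rw [l2_opNorm_diagonal])
    _ < ‖F‖⁻¹ * ‖F‖ := by
      gcongr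
      refine (pi_norm_lt_iff (by positivity)).mpr fun i => ?_
      rw [Pi.inv_apply, norm_inv]
      exact inv_strictAnti₀ (norm_pos_iff.mpr hF) (hd i)
    _ = 1 := inv_mul_cancel₀ (norm_ne_zero_iff.mpr hF)
  refine h ?_
  rw [show diagonal d - F = diagonal d * (1 - diagonal d⁻¹ * F) by
    rw [mul_sub, mul_one, ← mul_assoc, hdd, one_mul]]
  exact (IsUnit.of_mul_eq_one _ hdd).mul (isUnit_one_sub_of_norm_lt_one hsmall)

theorem Matrix.PosDef.exists_transpose_mul_mul_eq_one {A : Matrix n n ℝ} (hA : A.PosDef) :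
    ∃ (R : Matrix n n ℝ) (lam : n → ℝ), (∀ i, lam i ∈ spectrum ℝ A ∧ 0 < lam i) ∧
      Rᵀ * A * R = 1 ∧ Rᵀ * R = diagonal fun i => (lam i)⁻¹ := by
  set U : Matrix n n ℝ := (hA.1.eigenvectorUnitary : Matrix n n ℝ)
  set lam := hA.1.eigenvalues
  set s : n → ℝ := fun i => (√(lam i))⁻¹
  have hUAU : Uᵀ * A * U = diagonal lam := by
    simpa only [Unitary.conjStarAlgAut_star_apply, star_eq_conjTranspose,
      conjTranspose_eq_transpose_of_trivial, RCLike.ofReal_real_eq_id, Function.id_comp] using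
      hA.1.conjStarAlgAut_star_eigenvectorUnitary
  have hUU : Uᵀ * U = 1 := by
    simpa only [star_eq_conjTranspose, conjTranspose_eq_transpose_of_trivial] using
      Unitary.coe_star_mul_self hA.1.eigenvectorUnitary
  have hs : ∀ i, s i * s i = (lam i)⁻¹ := fun i => by
    rw [← mul_inv, Real.mul_self_sqrt (hA.eigenvalues_pos i).le]
  have hcongr (M : Matrix n n ℝ) : (U * diagonal s)ᵀ * M * (U * diagonal s) =
      diagonal s * (Uᵀ * M * U) * diagonal s := by
    simp only [transpose_mul, diagonal_transpose, Matrix.mul_assoc]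
  refine ⟨U * diagonal s, lam, fun i => ⟨hA.1.eigenvalues_mem_spectrum_real i,
    hA.eigenvalues_pos i⟩, ?_, ?_⟩
  · rw [hcongr, hUAU, diagonal_mul_diagonal, diagonal_mul_diagonal, ← diagonal_one]
    congr 1 with i
    rw [mul_right_comm, hs, inv_mul_cancel₀ (hA.eigenvalues_pos i).ne']
  · simpa [hUU, diagonal_mul_diagonal, hs] using hcongr 1

theorem Matrix.not_isUnit_diagonal_sub_of_mem_spectrum {A Astar R : Matrix n n ℝ} {w : n → ℝ}
    (hRA : Rᵀ * A * R = 1) (hRR : Rᵀ * R = diagonal w) {μ : ℂ}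
    (hμ : μ ∈ spectrum ℂ (Astar.map ((↑) : ℝ → ℂ))) :
    ¬IsUnit (diagonal (fun i => 1 - μ * w i) - (Rᵀ * (A - Astar) * R).map ((↑) : ℝ → ℂ)) := by
  set φ : Matrix n n ℝ →+* Matrix n n ℂ := Complex.ofRealHom.mapMatrix
  have hdiag : diagonal (fun i => 1 - μ * w i) = 1 - μ • φ (diagonal w) := by
    ext i j; rcases eq_or_ne i j with rfl | hij <;> simp [φ, diagonal, *]
  have hperturb : φ (Rᵀ * (A - Astar) * R) = 1 - φ (Rᵀ * Astar * R) := by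
    rw [mul_sub, sub_mul, map_sub, hRA, map_one]
  have hcongr : φ Rᵀ * (μ • 1 - φ Astar) * φ R = μ • φ (Rᵀ * R) - φ (Rᵀ * Astar * R) := by
    rw [mul_sub, sub_mul, mul_smul_comm, mul_one, smul_mul_assoc, map_mul, map_mul, map_mul]
  have key : diagonal (fun i => 1 - μ * w i) - φ (Rᵀ * (A - Astar) * R) =
      -(φ Rᵀ * (algebraMap ℂ _ μ - φ Astar) * φ R) := by
    rw [hdiag, ← hRR, Algebra.algebraMap_eq_smul_one, hcongr, hperturb]
    abel
  intro hunit
  change IsUnit (_ - φ _) at hunit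
  rw [key, IsUnit.neg_iff] at hunit
  exact (spectrum.mem_iff.mp hμ) (isUnit_of_mul_isUnit_right (isUnit_of_mul_isUnit_left hunit))

theorem Matrix.l2_opNorm_transpose_mul_mul_le_of_coercive {H A R : Matrix n n ℝ}
    (hH : H.PosDef) {c : ℝ} (hc : 0 < c) (coer : ∀ v, c * (v ⬝ᵥ H *ᵥ v) ≤ v ⬝ᵥ A *ᵥ v)
    (hR : Rᵀ * A * R = 1) (M : Matrix n n ℝ) :
    ‖Rᵀ * M * R‖ ≤ ‖(CFC.sqrt H)⁻¹ * M * (CFC.sqrt H)⁻¹‖ / c := by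
  set T := CFC.sqrt H
  have hTsymm : Tᵀ = T := by
    rw [← conjTranspose_eq_transpose_of_trivial]; exact (CFC.sqrt_nonneg H).posSemidef.1
  have hTT : T * T = H := CFC.sqrt_mul_sqrt_self H hH.posSemidef.nonneg
  have hTdet : IsUnit T.det :=
    (isUnit_iff_isUnit_det T).mp (isUnit_of_mul_isUnit_left (hTT ▸ hH.isUnit))
  have hTR : ‖T * R‖ ^ 2 ≤ c⁻¹ := by
    refine sq_l2_opNorm_le_of_forall_dotProduct_le (inv_nonneg.mpr hc.le) fun v => ?_
    calc ((T * R) *ᵥ v) ⬝ᵥ ((T * R) *ᵥ v) = (R *ᵥ v) ⬝ᵥ (H *ᵥ (R *ᵥ v)) := by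
          rw [← mulVec_mulVec, mulVec_dotProduct_mulVec, hTsymm, hTT]
      _ ≤ c⁻¹ * ((R *ᵥ v) ⬝ᵥ (A *ᵥ (R *ᵥ v))) := by
          rw [le_inv_mul_iff₀ hc]; exact coer _
      _ = c⁻¹ * (v ⬝ᵥ v) := by
          rw [mulVec_mulVec, mulVec_dotProduct_mulVec, ← mul_assoc, hR, one_mulVec]
  calc ‖Rᵀ * M * R‖ = ‖(T * R)ᵀ * (T⁻¹ * M * T⁻¹) * (T * R)‖ := by
        rw [transpose_mul, hTsymm]
        simp only [mul_assoc, nonsing_inv_mul_cancel_left _ _ hTdet]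
        rw [← mul_assoc T, mul_nonsing_inv _ hTdet, one_mul]
    _ ≤ ‖T * R‖ ^ 2 * ‖T⁻¹ * M * T⁻¹‖ := l2_opNorm_transpose_mul_mul_self_le _ _
    _ ≤ c⁻¹ * ‖T⁻¹ * M * T⁻¹‖ := by gcongr
    _ = ‖T⁻¹ * M * T⁻¹‖ / c := inv_mul_eq_div _ _

end Square

/-- Quantitative inequality from the proof of Proposition 1: if `H` and `A` are symmetric
positive definite with `vᵀAv ≥ c·vᵀHv` for all `v`, then every complex eigenvalue `μ` of an
arbitrary matrix `A*` is within relative distance `(1/c)·‖H^{-1/2}(A - A*)H^{-1/2}‖` of some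
(positive) eigenvalue `λ` of `A`. -/
theorem eigenvalue_relative_perturbation_bound
    {N : ℕ} (H A Astar : Matrix (Fin N) (Fin N) ℝ)
    (hH : H.PosDef) (hA : A.PosDef)
    (c : ℝ) (hc : 0 < c)
    (coer : ∀ v : Fin N → ℝ, c * (v ⬝ᵥ H.mulVec v) ≤ v ⬝ᵥ A.mulVec v) :
    ∀ μ ∈ spectrum ℂ (Astar.map (fun x : ℝ => (x : ℂ))),
      ∃ l ∈ spectrum ℝ A, 0 < l ∧
        ‖(l : ℂ) - μ‖ ≤
          (l / c) * ‖(CFC.sqrt H)⁻¹ * (A - Astar) * (CFC.sqrt H)⁻¹‖ := by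
  intro μ hμ
  obtain ⟨R, lam, hlam, hRA, hRR⟩ := hA.exists_transpose_mul_mul_eq_one
  obtain ⟨i, hi⟩ := exists_norm_le_of_not_isUnit_diagonal_sub
    (not_isUnit_diagonal_sub_of_mem_spectrum hRA hRR hμ)
  have hF := l2_opNorm_transpose_mul_mul_le_of_coercive hH hc coer hRA (A - Astar)
  obtain ⟨hlam_mem, hlam_pos⟩ := hlam i
  have hlam_ne : (lam i : ℂ) ≠ 0 := by exact_mod_cast hlam_pos.ne'
  refine ⟨lam i, hlam_mem, hlam_pos, ?_⟩
  calc ‖(lam i : ℂ) - μ‖ = ‖(lam i : ℂ)‖ * ‖1 - μ * ((lam i)⁻¹ : ℝ)‖ := by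
        rw [← norm_mul, mul_sub, mul_one, mul_left_comm, Complex.ofReal_inv,
          mul_inv_cancel₀ hlam_ne, mul_one]
    _ = lam i * ‖1 - μ * ((lam i)⁻¹ : ℝ)‖ := by rw [Complex.norm_of_nonneg hlam_pos.le]
    _ ≤ lam i * (‖(CFC.sqrt H)⁻¹ * (A - Astar) * (CFC.sqrt H)⁻¹‖ / c) := by
        gcongr
        exact hi.trans ((l2_opNorm_map_ofReal_le_s3 _).trans hF)
    _ = _ := by ring
end

section
/- Let M₁, M₂, K₁, K₂ be real n × n matrices with M₁, M₂ invertible, let Q₁, Q₂ be orthogonal real n × n matrices, set R_l := Q_lᵀ M_l⁻¹ K_l Q_l and G_l := (M_lᵀ)⁻¹ Q_l for l = 1, 2, and assume the matrix R₂ ⊗ Iₙ + Iₙ ⊗ R₁ is invertible. Then for every b ∈ ℝ^{n²}, the vector s := (Q₂ ⊗ Q₁) · (R₂ ⊗ Iₙ + Iₙ ⊗ R₁)⁻¹ · (G₂ ⊗ G₁)ᵀ · b satisfies (K₂ ⊗ M₁ + M₂ ⊗ K₁) s = b. -/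
open scoped Kronecker
open Matrix

private lemma bs_conj_inv {N : Type*} [Fintype N] [DecidableEq N]
    (P Pi S : Matrix N N ℝ) (h1 : P * Pi = 1) (h2 : Pi * P = 1) (hS : IsUnit S) :
    (Pi * S * P)⁻¹ = Pi * S⁻¹ * P := by
  apply Matrix.inv_eq_right_inv
  have hSd : IsUnit S.det := (Matrix.isUnit_iff_isUnit_det S).mp hS
  calc Pi * S * P * (Pi * S⁻¹ * P)
      = Pi * (S * ((P * Pi) * S⁻¹)) * P := by simp only [Matrix.mul_assoc]
    _ = 1 := by
        rw [h1, Matrix.one_mul, Matrix.mul_nonsing_inv _ hSd, Matrix.mul_one, h2]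

/-- Correctness of the two-dimensional Bartels–Stewart solution formula (4.5):
with `R_l = Q_lᵀ M_l⁻¹ K_l Q_l`, `G_l = M_l⁻ᵀ Q_l` and `R₂ ⊗ I + I ⊗ R₁` invertible,
`s = (Q₂ ⊗ Q₁)(R₂ ⊗ I + I ⊗ R₁)⁻¹(G₂ ⊗ G₁)ᵀ b` solves `(K₂ ⊗ M₁ + M₂ ⊗ K₁)s = b`. -/
theorem bartels_stewart_2D
    {n : ℕ} (M₁ M₂ K₁ K₂ Q₁ Q₂ : Matrix (Fin n) (Fin n) ℝ)
    (hM₁ : IsUnit M₁) (hM₂ : IsUnit M₂)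
    (hQ₁ : Q₁ᵀ * Q₁ = 1) (hQ₂ : Q₂ᵀ * Q₂ = 1)
    (R₁ R₂ G₁ G₂ : Matrix (Fin n) (Fin n) ℝ)
    (hR₁ : R₁ = Q₁ᵀ * (M₁⁻¹ * K₁) * Q₁) (hR₂ : R₂ = Q₂ᵀ * (M₂⁻¹ * K₂) * Q₂)
    (hG₁ : G₁ = (M₁ᵀ)⁻¹ * Q₁) (hG₂ : G₂ = (M₂ᵀ)⁻¹ * Q₂)
    (hT : IsUnit (R₂ ⊗ₖ (1 : Matrix (Fin n) (Fin n) ℝ) +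
      (1 : Matrix (Fin n) (Fin n) ℝ) ⊗ₖ R₁)) :
    ∀ b : Fin n × Fin n → ℝ,
      (K₂ ⊗ₖ M₁ + M₂ ⊗ₖ K₁).mulVec
        (((Q₂ ⊗ₖ Q₁) *
          (R₂ ⊗ₖ (1 : Matrix (Fin n) (Fin n) ℝ) +
            (1 : Matrix (Fin n) (Fin n) ℝ) ⊗ₖ R₁)⁻¹ *
          (G₂ ⊗ₖ G₁)ᵀ).mulVec b) = b := by
  intro b
  have hd₁ : IsUnit M₁.det := (Matrix.isUnit_iff_isUnit_det M₁).mp hM₁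
  have hd₂ : IsUnit M₂.det := (Matrix.isUnit_iff_isUnit_det M₂).mp hM₂
  set A₁ := M₁⁻¹ * K₁ with hA₁
  set A₂ := M₂⁻¹ * K₂ with hA₂
  set S := A₂ ⊗ₖ (1 : Matrix (Fin n) (Fin n) ℝ) +
      (1 : Matrix (Fin n) (Fin n) ℝ) ⊗ₖ A₁ with hS
  have hQ₁' : Q₁ * Q₁ᵀ = 1 := mul_eq_one_comm.mp hQ₁
  have hQ₂' : Q₂ * Q₂ᵀ = 1 := mul_eq_one_comm.mp hQ₂
  have hK : (Q₂ ⊗ₖ Q₁) * (Q₂ᵀ ⊗ₖ Q₁ᵀ) = 1 := by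
    rw [← Matrix.mul_kronecker_mul, hQ₂', hQ₁', Matrix.one_kronecker_one]
  have hK' : (Q₂ᵀ ⊗ₖ Q₁ᵀ) * (Q₂ ⊗ₖ Q₁) = 1 := mul_eq_one_comm.mp hK
  -- T as a conjugation of S
  have hTS : R₂ ⊗ₖ (1 : Matrix (Fin n) (Fin n) ℝ) +
      (1 : Matrix (Fin n) (Fin n) ℝ) ⊗ₖ R₁
      = (Q₂ᵀ ⊗ₖ Q₁ᵀ) * S * (Q₂ ⊗ₖ Q₁) := by
    rw [hS, hR₁, hR₂, Matrix.mul_add, Matrix.add_mul]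
    congr 1
    · rw [← Matrix.mul_kronecker_mul, ← Matrix.mul_kronecker_mul]
      rw [Matrix.mul_one, hQ₁]
    · rw [← Matrix.mul_kronecker_mul, ← Matrix.mul_kronecker_mul]
      rw [Matrix.mul_one, hQ₂]
  have hSU : IsUnit S := by
    have hback : S = (Q₂ ⊗ₖ Q₁) *
        ((Q₂ᵀ ⊗ₖ Q₁ᵀ) * S * (Q₂ ⊗ₖ Q₁)) * (Q₂ᵀ ⊗ₖ Q₁ᵀ) := by
      calc S = ((Q₂ ⊗ₖ Q₁) * (Q₂ᵀ ⊗ₖ Q₁ᵀ)) * S *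
            ((Q₂ ⊗ₖ Q₁) * (Q₂ᵀ ⊗ₖ Q₁ᵀ)) := by
              rw [hK, Matrix.one_mul, Matrix.mul_one]
        _ = _ := by simp only [Matrix.mul_assoc]
    have hKU : IsUnit (Q₂ ⊗ₖ Q₁) := ⟨⟨_, _, hK, hK'⟩, rfl⟩
    have hKU' : IsUnit (Q₂ᵀ ⊗ₖ Q₁ᵀ) := ⟨⟨_, _, hK', hK⟩, rfl⟩
    rw [hback, ← hTS]
    exact (hKU.mul hT).mul hKU'
  have hSd : IsUnit S.det := (Matrix.isUnit_iff_isUnit_det S).mp hSU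
  -- transposes of G
  have hGt₂ : G₂ᵀ = Q₂ᵀ * M₂⁻¹ := by
    rw [hG₂, Matrix.transpose_mul, ← Matrix.transpose_nonsing_inv,
      Matrix.transpose_transpose]
  have hGt₁ : G₁ᵀ = Q₁ᵀ * M₁⁻¹ := by
    rw [hG₁, Matrix.transpose_mul, ← Matrix.transpose_nonsing_inv,
      Matrix.transpose_transpose]
  -- the combined matrix is a right inverse
  have hfac : K₂ ⊗ₖ M₁ + M₂ ⊗ₖ K₁ = (M₂ ⊗ₖ M₁) * S := by
    rw [hS, Matrix.mul_add, ← Matrix.mul_kronecker_mul, ← Matrix.mul_kronecker_mul,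
      Matrix.mul_one, Matrix.mul_one, hA₁, hA₂,
      Matrix.mul_nonsing_inv_cancel_left _ _ hd₂,
      Matrix.mul_nonsing_inv_cancel_left _ _ hd₁]
  have hinv : (Q₂ ⊗ₖ Q₁) *
      (R₂ ⊗ₖ (1 : Matrix (Fin n) (Fin n) ℝ) +
        (1 : Matrix (Fin n) (Fin n) ℝ) ⊗ₖ R₁)⁻¹ *
      (G₂ ⊗ₖ G₁)ᵀ = S⁻¹ * (M₂⁻¹ ⊗ₖ M₁⁻¹) := by
    rw [hTS, bs_conj_inv _ _ _ hK hK' hSU, ← Matrix.kroneckerMap_transpose, hGt₁, hGt₂]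
    calc (Q₂ ⊗ₖ Q₁) * ((Q₂ᵀ ⊗ₖ Q₁ᵀ) * S⁻¹ * (Q₂ ⊗ₖ Q₁)) *
          ((Q₂ᵀ * M₂⁻¹) ⊗ₖ (Q₁ᵀ * M₁⁻¹))
        = ((Q₂ ⊗ₖ Q₁) * (Q₂ᵀ ⊗ₖ Q₁ᵀ)) * (S⁻¹ *
            ((Q₂ ⊗ₖ Q₁) * ((Q₂ᵀ * M₂⁻¹) ⊗ₖ (Q₁ᵀ * M₁⁻¹)))) := by
          simp only [Matrix.mul_assoc]
      _ = S⁻¹ * (M₂⁻¹ ⊗ₖ M₁⁻¹) := by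
          rw [hK, Matrix.one_mul, ← Matrix.mul_kronecker_mul,
            ← Matrix.mul_assoc Q₂, ← Matrix.mul_assoc Q₁, hQ₂', hQ₁',
            Matrix.one_mul, Matrix.one_mul]
  have key : (K₂ ⊗ₖ M₁ + M₂ ⊗ₖ K₁) *
      ((Q₂ ⊗ₖ Q₁) *
        (R₂ ⊗ₖ (1 : Matrix (Fin n) (Fin n) ℝ) +
          (1 : Matrix (Fin n) (Fin n) ℝ) ⊗ₖ R₁)⁻¹ *
        (G₂ ⊗ₖ G₁)ᵀ) = 1 := by
    rw [hinv, hfac, Matrix.mul_assoc, Matrix.mul_nonsing_inv_cancel_left _ _ hSd,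
      ← Matrix.mul_kronecker_mul, Matrix.mul_nonsing_inv _ hd₂,
      Matrix.mul_nonsing_inv _ hd₁, Matrix.one_kronecker_one]
  rw [Matrix.mulVec_mulVec, key, Matrix.one_mulVec]
end

section
/- Let M₁, M₂, K₁, K₂, U₁, U₂, D₁, D₂ be real n × n matrices with M₁, M₂, U₁, U₂ invertible and M_l⁻¹ K_l U_l = U_l D_l for l = 1, 2, and set V_l := ((M_l U_l)ᵀ)⁻¹. Then K₂ ⊗ M₁ + M₂ ⊗ K₁ = ((V₂ ⊗ V₁)ᵀ)⁻¹ · (D₂ ⊗ Iₙ + Iₙ ⊗ D₁) · (U₂ ⊗ U₁)⁻¹. -/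
open scoped Kronecker
open Matrix

/-- Two-dimensional matrix factorization underlying the nonsymmetric Fast Diagonalization
method: with `M_l⁻¹ K_l U_l = U_l D_l` and `V_l := ((M_l U_l)ᵀ)⁻¹`,
`K₂ ⊗ M₁ + M₂ ⊗ K₁ = ((V₂ ⊗ V₁)ᵀ)⁻¹ (D₂ ⊗ I + I ⊗ D₁)(U₂ ⊗ U₁)⁻¹`. -/
theorem fast_diagonalization_factorization_2D
    {n : ℕ} (M₁ M₂ K₁ K₂ U₁ U₂ D₁ D₂ : Matrix (Fin n) (Fin n) ℝ)
    (hM₁ : IsUnit M₁) (hM₂ : IsUnit M₂) (hU₁ : IsUnit U₁) (hU₂ : IsUnit U₂)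
    (h₁ : M₁⁻¹ * K₁ * U₁ = U₁ * D₁) (h₂ : M₂⁻¹ * K₂ * U₂ = U₂ * D₂)
    (V₁ V₂ : Matrix (Fin n) (Fin n) ℝ)
    (hV₁ : V₁ = ((M₁ * U₁)ᵀ)⁻¹) (hV₂ : V₂ = ((M₂ * U₂)ᵀ)⁻¹) :
    K₂ ⊗ₖ M₁ + M₂ ⊗ₖ K₁ =
      ((V₂ ⊗ₖ V₁)ᵀ)⁻¹ *
        (D₂ ⊗ₖ (1 : Matrix (Fin n) (Fin n) ℝ) + (1 : Matrix (Fin n) (Fin n) ℝ) ⊗ₖ D₁) *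
        (U₂ ⊗ₖ U₁)⁻¹ := by
  have key₁ : K₁ * U₁ = M₁ * U₁ * D₁ := by
    have := congrArg (fun X => M₁ * X) h₁
    simpa [Matrix.mul_assoc, Matrix.mul_nonsing_inv_cancel_left _ _
      ((Matrix.isUnit_iff_isUnit_det _).mp hM₁)] using this
  have key₂ : K₂ * U₂ = M₂ * U₂ * D₂ := by
    have := congrArg (fun X => M₂ * X) h₂
    simpa [Matrix.mul_assoc, Matrix.mul_nonsing_inv_cancel_left _ _
      ((Matrix.isUnit_iff_isUnit_det _).mp hM₂)] using this
  have hK₁ : K₁ = M₁ * U₁ * D₁ * U₁⁻¹ := by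
    rw [← key₁, Matrix.mul_assoc, Matrix.mul_nonsing_inv _
      ((Matrix.isUnit_iff_isUnit_det _).mp hU₁), Matrix.mul_one]
  have hK₂ : K₂ = M₂ * U₂ * D₂ * U₂⁻¹ := by
    rw [← key₂, Matrix.mul_assoc, Matrix.mul_nonsing_inv _
      ((Matrix.isUnit_iff_isUnit_det _).mp hU₂), Matrix.mul_one]
  have hVt : ((V₂ ⊗ₖ V₁)ᵀ)⁻¹ = (M₂ * U₂) ⊗ₖ (M₁ * U₁) := by
    rw [hV₁, hV₂, ← Matrix.kroneckerMap_transpose, Matrix.transpose_nonsing_inv,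
      Matrix.transpose_nonsing_inv, Matrix.transpose_transpose, Matrix.transpose_transpose,
      Matrix.inv_kronecker, Matrix.nonsing_inv_nonsing_inv _
        ((Matrix.isUnit_iff_isUnit_det _).mp (hM₂.mul hU₂)),
      Matrix.nonsing_inv_nonsing_inv _
        ((Matrix.isUnit_iff_isUnit_det _).mp (hM₁.mul hU₁))]
  rw [hVt, Matrix.inv_kronecker, Matrix.mul_add, Matrix.add_mul,
    ← Matrix.mul_kronecker_mul, ← Matrix.mul_kronecker_mul,
    ← Matrix.mul_kronecker_mul, ← Matrix.mul_kronecker_mul,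
    Matrix.mul_one, Matrix.mul_one]
  rw [Matrix.mul_assoc M₂ U₂ U₂⁻¹, Matrix.mul_assoc M₁ U₁ U₁⁻¹,
    Matrix.mul_nonsing_inv _ ((Matrix.isUnit_iff_isUnit_det _).mp hU₂),
    Matrix.mul_nonsing_inv _ ((Matrix.isUnit_iff_isUnit_det _).mp hU₁),
    Matrix.mul_one, Matrix.mul_one, ← hK₁, ← hK₂]
end

section
/- Let M₁, M₂, K₁, K₂, U₁, U₂, D₁, D₂ be real n × n matrices with M₁, M₂, U₁, U₂ invertible, M_l⁻¹ K_l U_l = U_l D_l for l = 1, 2, and set V_l := ((M_l U_l)ᵀ)⁻¹. Assume moreover that D₂ ⊗ Iₙ + Iₙ ⊗ D₁ is invertible. Then for every b ∈ ℝ^{n²}, the vector s := (U₂ ⊗ U₁) · (D₂ ⊗ Iₙ + Iₙ ⊗ D₁)⁻¹ · (V₂ ⊗ V₁)ᵀ · b satisfies (K₂ ⊗ M₁ + M₂ ⊗ K₁) s = b. -/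
open scoped Kronecker
open Matrix

/-- Correctness of the two-dimensional nonsymmetric Fast Diagonalization formula (4.7):
with `M_l⁻¹ K_l U_l = U_l D_l`, `V_l := ((M_l U_l)ᵀ)⁻¹` and `D₂ ⊗ I + I ⊗ D₁` invertible,
`s = (U₂ ⊗ U₁)(D₂ ⊗ I + I ⊗ D₁)⁻¹(V₂ ⊗ V₁)ᵀ b` solves `(K₂ ⊗ M₁ + M₂ ⊗ K₁)s = b`. -/
theorem fast_diagonalization_2D
    {n : ℕ} (M₁ M₂ K₁ K₂ U₁ U₂ D₁ D₂ : Matrix (Fin n) (Fin n) ℝ)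
    (hM₁ : IsUnit M₁) (hM₂ : IsUnit M₂) (hU₁ : IsUnit U₁) (hU₂ : IsUnit U₂)
    (h₁ : M₁⁻¹ * K₁ * U₁ = U₁ * D₁) (h₂ : M₂⁻¹ * K₂ * U₂ = U₂ * D₂)
    (V₁ V₂ : Matrix (Fin n) (Fin n) ℝ)
    (hV₁ : V₁ = ((M₁ * U₁)ᵀ)⁻¹) (hV₂ : V₂ = ((M₂ * U₂)ᵀ)⁻¹)
    (hD : IsUnit (D₂ ⊗ₖ (1 : Matrix (Fin n) (Fin n) ℝ) +
      (1 : Matrix (Fin n) (Fin n) ℝ) ⊗ₖ D₁)) :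
    ∀ b : Fin n × Fin n → ℝ,
      (K₂ ⊗ₖ M₁ + M₂ ⊗ₖ K₁).mulVec
        (((U₂ ⊗ₖ U₁) *
          (D₂ ⊗ₖ (1 : Matrix (Fin n) (Fin n) ℝ) +
            (1 : Matrix (Fin n) (Fin n) ℝ) ⊗ₖ D₁)⁻¹ *
          (V₂ ⊗ₖ V₁)ᵀ).mulVec b) = b := by
  intro b
  set Dk := D₂ ⊗ₖ (1 : Matrix (Fin n) (Fin n) ℝ) + (1 : Matrix (Fin n) (Fin n) ℝ) ⊗ₖ D₁ with hDk
  -- basic facts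
  have hMU₁ : IsUnit (M₁ * U₁) := hM₁.mul hU₁
  have hMU₂ : IsUnit (M₂ * U₂) := hM₂.mul hU₂
  have hK₁ : K₁ * U₁ = M₁ * U₁ * D₁ := by
    have := congrArg (fun X => M₁ * X) h₁
    simpa [Matrix.mul_assoc, Matrix.mul_nonsing_inv_cancel_left _ _
      ((Matrix.isUnit_iff_isUnit_det _).mp hM₁)] using this
  have hK₂ : K₂ * U₂ = M₂ * U₂ * D₂ := by
    have := congrArg (fun X => M₂ * X) h₂
    simpa [Matrix.mul_assoc, Matrix.mul_nonsing_inv_cancel_left _ _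
      ((Matrix.isUnit_iff_isUnit_det _).mp hM₂)] using this
  have hVt₁ : V₁ᵀ = (M₁ * U₁)⁻¹ := by
    rw [hV₁, ← Matrix.transpose_nonsing_inv, Matrix.transpose_transpose]
  have hVt₂ : V₂ᵀ = (M₂ * U₂)⁻¹ := by
    rw [hV₂, ← Matrix.transpose_nonsing_inv, Matrix.transpose_transpose]
  have hVkt : (V₂ ⊗ₖ V₁)ᵀ = (M₂ * U₂)⁻¹ ⊗ₖ (M₁ * U₁)⁻¹ := by
    rw [← Matrix.kroneckerMap_transpose, hVt₁, hVt₂]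
  -- main matrix identity
  have key : (K₂ ⊗ₖ M₁ + M₂ ⊗ₖ K₁) *
      ((U₂ ⊗ₖ U₁) * Dk⁻¹ * (V₂ ⊗ₖ V₁)ᵀ) = 1 := by
    have hAU : (K₂ ⊗ₖ M₁ + M₂ ⊗ₖ K₁) * (U₂ ⊗ₖ U₁)
        = ((M₂ * U₂) ⊗ₖ (M₁ * U₁)) * Dk := by
      rw [hDk, Matrix.add_mul, Matrix.mul_add]
      rw [← Matrix.mul_kronecker_mul, ← Matrix.mul_kronecker_mul,
        ← Matrix.mul_kronecker_mul, ← Matrix.mul_kronecker_mul, hK₁, hK₂]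
      simp [Matrix.mul_assoc]
    have hDDinv : Dk * Dk⁻¹ = 1 :=
      Matrix.mul_nonsing_inv _ ((Matrix.isUnit_iff_isUnit_det _).mp hD)
    calc (K₂ ⊗ₖ M₁ + M₂ ⊗ₖ K₁) * ((U₂ ⊗ₖ U₁) * Dk⁻¹ * (V₂ ⊗ₖ V₁)ᵀ)
        = ((K₂ ⊗ₖ M₁ + M₂ ⊗ₖ K₁) * (U₂ ⊗ₖ U₁)) * Dk⁻¹ * (V₂ ⊗ₖ V₁)ᵀ := by
          simp [Matrix.mul_assoc]
      _ = ((M₂ * U₂) ⊗ₖ (M₁ * U₁)) * (Dk * Dk⁻¹) * (V₂ ⊗ₖ V₁)ᵀ := by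
          rw [hAU]; simp [Matrix.mul_assoc]
      _ = ((M₂ * U₂) ⊗ₖ (M₁ * U₁)) * ((M₂ * U₂)⁻¹ ⊗ₖ (M₁ * U₁)⁻¹) := by
          rw [hDDinv, hVkt, Matrix.mul_one]
      _ = 1 := by
          rw [← Matrix.mul_kronecker_mul,
            Matrix.mul_nonsing_inv _ ((Matrix.isUnit_iff_isUnit_det _).mp hMU₂),
            Matrix.mul_nonsing_inv _ ((Matrix.isUnit_iff_isUnit_det _).mp hMU₁),
            Matrix.one_kronecker_one]
  rw [Matrix.mulVec_mulVec, key, Matrix.one_mulVec]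
end

section
/- Let M_l, K_l (l = 1, 2, 3) be real n × n matrices with every M_l invertible, let Q₁, Q₂, Q₃ be orthogonal real n × n matrices, set R_l := Q_lᵀ M_l⁻¹ K_l Q_l and G_l := (M_lᵀ)⁻¹ Q_l, and assume the matrix T := R₃ ⊗ Iₙ ⊗ Iₙ + Iₙ ⊗ R₂ ⊗ Iₙ + Iₙ ⊗ Iₙ ⊗ R₁ is invertible. Then for every b ∈ ℝ^{n³}, the vector s := (Q₃ ⊗ Q₂ ⊗ Q₁) · T⁻¹ · (G₃ ⊗ G₂ ⊗ G₁)ᵀ · b satisfies (K₃ ⊗ M₂ ⊗ M₁ + M₃ ⊗ K₂ ⊗ M₁ + M₃ ⊗ M₂ ⊗ K₁) s = b. -/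
open scoped Kronecker
open Matrix

private lemma kron_transpose {a b : Type*} [Mul ℝ] (A : Matrix a a ℝ) (B : Matrix b b ℝ) :
    (A ⊗ₖ B)ᵀ = Aᵀ ⊗ₖ Bᵀ :=
  (Matrix.kroneckerMap_transpose _ _ _).symm

/-- Correctness of the three-dimensional Bartels–Stewart solution formula (4.8):
with `R_l = Q_lᵀ M_l⁻¹ K_l Q_l`, `G_l = M_l⁻ᵀ Q_l` and
`T = R₃ ⊗ I ⊗ I + I ⊗ R₂ ⊗ I + I ⊗ I ⊗ R₁` invertible,
`s = (Q₃ ⊗ Q₂ ⊗ Q₁) T⁻¹ (G₃ ⊗ G₂ ⊗ G₁)ᵀ b` solves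
`(K₃ ⊗ M₂ ⊗ M₁ + M₃ ⊗ K₂ ⊗ M₁ + M₃ ⊗ M₂ ⊗ K₁)s = b`. -/
theorem bartels_stewart_3D
    {n : ℕ} (M₁ M₂ M₃ K₁ K₂ K₃ Q₁ Q₂ Q₃ : Matrix (Fin n) (Fin n) ℝ)
    (hM₁ : IsUnit M₁) (hM₂ : IsUnit M₂) (hM₃ : IsUnit M₃)
    (hQ₁ : Q₁ᵀ * Q₁ = 1) (hQ₂ : Q₂ᵀ * Q₂ = 1) (hQ₃ : Q₃ᵀ * Q₃ = 1)
    (R₁ R₂ R₃ G₁ G₂ G₃ : Matrix (Fin n) (Fin n) ℝ)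
    (hR₁ : R₁ = Q₁ᵀ * (M₁⁻¹ * K₁) * Q₁) (hR₂ : R₂ = Q₂ᵀ * (M₂⁻¹ * K₂) * Q₂)
    (hR₃ : R₃ = Q₃ᵀ * (M₃⁻¹ * K₃) * Q₃)
    (hG₁ : G₁ = (M₁ᵀ)⁻¹ * Q₁) (hG₂ : G₂ = (M₂ᵀ)⁻¹ * Q₂) (hG₃ : G₃ = (M₃ᵀ)⁻¹ * Q₃)
    (T : Matrix (Fin n × (Fin n × Fin n)) (Fin n × (Fin n × Fin n)) ℝ)
    (hT : T = R₃ ⊗ₖ ((1 : Matrix (Fin n) (Fin n) ℝ) ⊗ₖ (1 : Matrix (Fin n) (Fin n) ℝ)) +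
      (1 : Matrix (Fin n) (Fin n) ℝ) ⊗ₖ (R₂ ⊗ₖ (1 : Matrix (Fin n) (Fin n) ℝ)) +
      (1 : Matrix (Fin n) (Fin n) ℝ) ⊗ₖ ((1 : Matrix (Fin n) (Fin n) ℝ) ⊗ₖ R₁))
    (hTunit : IsUnit T) :
    ∀ b : Fin n × (Fin n × Fin n) → ℝ,
      (K₃ ⊗ₖ (M₂ ⊗ₖ M₁) + M₃ ⊗ₖ (K₂ ⊗ₖ M₁) + M₃ ⊗ₖ (M₂ ⊗ₖ K₁)).mulVec
        (((Q₃ ⊗ₖ (Q₂ ⊗ₖ Q₁)) * T⁻¹ * (G₃ ⊗ₖ (G₂ ⊗ₖ G₁))ᵀ).mulVec b) = b := by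
  intro b
  -- basic invertibility / orthogonality facts
  have hd₁ : IsUnit M₁.det := (Matrix.isUnit_iff_isUnit_det M₁).mp hM₁
  have hd₂ : IsUnit M₂.det := (Matrix.isUnit_iff_isUnit_det M₂).mp hM₂
  have hd₃ : IsUnit M₃.det := (Matrix.isUnit_iff_isUnit_det M₃).mp hM₃
  have hM₁' : M₁ * M₁⁻¹ = 1 := Matrix.mul_nonsing_inv _ hd₁
  have hM₂' : M₂ * M₂⁻¹ = 1 := Matrix.mul_nonsing_inv _ hd₂
  have hM₃' : M₃ * M₃⁻¹ = 1 := Matrix.mul_nonsing_inv _ hd₃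
  have hQ₁' : Q₁ * Q₁ᵀ = 1 := mul_eq_one_comm.mp hQ₁
  have hQ₂' : Q₂ * Q₂ᵀ = 1 := mul_eq_one_comm.mp hQ₂
  have hQ₃' : Q₃ * Q₃ᵀ = 1 := mul_eq_one_comm.mp hQ₃
  set P : Matrix (Fin n × (Fin n × Fin n)) (Fin n × (Fin n × Fin n)) ℝ :=
    Q₃ ⊗ₖ (Q₂ ⊗ₖ Q₁) with hP
  have hPt : Pᵀ = Q₃ᵀ ⊗ₖ (Q₂ᵀ ⊗ₖ Q₁ᵀ) := by
    rw [hP, kron_transpose, kron_transpose]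
  have hPPt : P * Pᵀ = 1 := by
    rw [hP, hPt, ← Matrix.mul_kronecker_mul, ← Matrix.mul_kronecker_mul, hQ₁', hQ₂', hQ₃',
      Matrix.one_kronecker_one, Matrix.one_kronecker_one]
  -- transpose of the G-Kronecker factor
  have g₁ : G₁ᵀ = Q₁ᵀ * M₁⁻¹ := by
    rw [hG₁, Matrix.transpose_mul, Matrix.transpose_nonsing_inv, Matrix.transpose_transpose]
  have g₂ : G₂ᵀ = Q₂ᵀ * M₂⁻¹ := by
    rw [hG₂, Matrix.transpose_mul, Matrix.transpose_nonsing_inv, Matrix.transpose_transpose]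
  have g₃ : G₃ᵀ = Q₃ᵀ * M₃⁻¹ := by
    rw [hG₃, Matrix.transpose_mul, Matrix.transpose_nonsing_inv, Matrix.transpose_transpose]
  have hGk : (G₃ ⊗ₖ (G₂ ⊗ₖ G₁))ᵀ = Pᵀ * (M₃⁻¹ ⊗ₖ (M₂⁻¹ ⊗ₖ M₁⁻¹)) := by
    rw [kron_transpose, kron_transpose, g₁, g₂, g₃, hPt, ← Matrix.mul_kronecker_mul,
      ← Matrix.mul_kronecker_mul]
  -- key scalar identity: M * (Q * R) = K * Q
  have key : ∀ (M K Q R : Matrix (Fin n) (Fin n) ℝ), M * M⁻¹ = 1 → Q * Qᵀ = 1 →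
      R = Qᵀ * (M⁻¹ * K) * Q → M * (Q * R) = K * Q := by
    intro M K Q R hM hQ hR
    rw [hR]
    calc M * (Q * (Qᵀ * (M⁻¹ * K) * Q))
        = M * ((Q * Qᵀ) * (M⁻¹ * (K * Q))) := by noncomm_ring
      _ = M * M⁻¹ * (K * Q) := by rw [hQ, one_mul, ← Matrix.mul_assoc]
      _ = K * Q := by rw [hM, one_mul]
  have k₁ := key M₁ K₁ Q₁ R₁ hM₁' hQ₁' hR₁
  have k₂ := key M₂ K₂ Q₂ R₂ hM₂' hQ₂' hR₂
  have k₃ := key M₃ K₃ Q₃ R₃ hM₃' hQ₃' hR₃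
  set A : Matrix (Fin n × (Fin n × Fin n)) (Fin n × (Fin n × Fin n)) ℝ :=
    K₃ ⊗ₖ (M₂ ⊗ₖ M₁) + M₃ ⊗ₖ (K₂ ⊗ₖ M₁) + M₃ ⊗ₖ (M₂ ⊗ₖ K₁) with hA
  set Mk : Matrix (Fin n × (Fin n × Fin n)) (Fin n × (Fin n × Fin n)) ℝ :=
    M₃ ⊗ₖ (M₂ ⊗ₖ M₁) with hMk
  have e₃ : (K₃ ⊗ₖ (M₂ ⊗ₖ M₁)) * P =
      Mk * (P * (R₃ ⊗ₖ ((1 : Matrix (Fin n) (Fin n) ℝ) ⊗ₖ (1 : Matrix (Fin n) (Fin n) ℝ)))) := by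
    rw [hMk, hP]
    simp only [← Matrix.mul_kronecker_mul]
    rw [mul_one, mul_one, k₃]
  have e₂ : (M₃ ⊗ₖ (K₂ ⊗ₖ M₁)) * P =
      Mk * (P * ((1 : Matrix (Fin n) (Fin n) ℝ) ⊗ₖ (R₂ ⊗ₖ (1 : Matrix (Fin n) (Fin n) ℝ)))) := by
    rw [hMk, hP]
    simp only [← Matrix.mul_kronecker_mul]
    rw [mul_one, mul_one, k₂]
  have e₁ : (M₃ ⊗ₖ (M₂ ⊗ₖ K₁)) * P =
      Mk * (P * ((1 : Matrix (Fin n) (Fin n) ℝ) ⊗ₖ ((1 : Matrix (Fin n) (Fin n) ℝ) ⊗ₖ R₁))) := by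
    rw [hMk, hP]
    simp only [← Matrix.mul_kronecker_mul]
    rw [mul_one, mul_one, k₁]
  have hAP : A * P = Mk * (P * T) := by
    rw [hA, hT, add_mul, add_mul, mul_add, mul_add, mul_add, mul_add, e₃, e₂, e₁]
  have hTT : T * T⁻¹ = 1 :=
    Matrix.mul_nonsing_inv _ ((Matrix.isUnit_iff_isUnit_det T).mp hTunit)
  have hMkinv : Mk * (M₃⁻¹ ⊗ₖ (M₂⁻¹ ⊗ₖ M₁⁻¹)) = 1 := by
    rw [hMk, ← Matrix.mul_kronecker_mul, ← Matrix.mul_kronecker_mul, hM₁', hM₂', hM₃',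
      Matrix.one_kronecker_one, Matrix.one_kronecker_one]
  have main : A * (P * T⁻¹ * (G₃ ⊗ₖ (G₂ ⊗ₖ G₁))ᵀ) = 1 := by
    rw [hGk]
    calc A * (P * T⁻¹ * (Pᵀ * (M₃⁻¹ ⊗ₖ (M₂⁻¹ ⊗ₖ M₁⁻¹))))
        = (A * P) * T⁻¹ * Pᵀ * (M₃⁻¹ ⊗ₖ (M₂⁻¹ ⊗ₖ M₁⁻¹)) := by
          simp only [Matrix.mul_assoc]
      _ = Mk * (P * (T * T⁻¹)) * Pᵀ * (M₃⁻¹ ⊗ₖ (M₂⁻¹ ⊗ₖ M₁⁻¹)) := by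
          rw [hAP]; simp only [Matrix.mul_assoc]
      _ = Mk * (P * Pᵀ) * (M₃⁻¹ ⊗ₖ (M₂⁻¹ ⊗ₖ M₁⁻¹)) := by
          rw [hTT, Matrix.mul_one]; simp only [Matrix.mul_assoc]
      _ = 1 := by rw [hPPt, Matrix.mul_one, hMkinv]
  rw [Matrix.mulVec_mulVec, main, Matrix.one_mulVec]
end

section
/- Let M_l, K_l, U_l, D_l (l = 1, 2, 3) be real n × n matrices with every M_l and every U_l invertible and M_l⁻¹ K_l U_l = U_l D_l, and set V_l := ((M_l U_l)ᵀ)⁻¹. Assume the matrix T := D₃ ⊗ Iₙ ⊗ Iₙ + Iₙ ⊗ D₂ ⊗ Iₙ + Iₙ ⊗ Iₙ ⊗ D₁ is invertible. Then for every b ∈ ℝ^{n³}, the vector s := (U₃ ⊗ U₂ ⊗ U₁) · T⁻¹ · (V₃ ⊗ V₂ ⊗ V₁)ᵀ · b satisfies (K₃ ⊗ M₂ ⊗ M₁ + M₃ ⊗ K₂ ⊗ M₁ + M₃ ⊗ M₂ ⊗ K₁) s = b. -/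
open scoped Kronecker
open Matrix

lemma isUnit_kron {l m : Type*} [Fintype l] [Fintype m] [DecidableEq l] [DecidableEq m]
    {A : Matrix l l ℝ} {B : Matrix m m ℝ}
    (hA : IsUnit A) (hB : IsUnit B) : IsUnit (A ⊗ₖ B) := by
  rw [Matrix.isUnit_iff_isUnit_det] at *
  rw [Matrix.det_kronecker]
  exact (hA.pow _).mul (hB.pow _)

/-- Correctness of the three-dimensional nonsymmetric Fast Diagonalization formula (4.9):
with `M_l⁻¹ K_l U_l = U_l D_l`, `V_l := ((M_l U_l)ᵀ)⁻¹` and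
`T = D₃ ⊗ I ⊗ I + I ⊗ D₂ ⊗ I + I ⊗ I ⊗ D₁` invertible,
`s = (U₃ ⊗ U₂ ⊗ U₁) T⁻¹ (V₃ ⊗ V₂ ⊗ V₁)ᵀ b` solves
`(K₃ ⊗ M₂ ⊗ M₁ + M₃ ⊗ K₂ ⊗ M₁ + M₃ ⊗ M₂ ⊗ K₁)s = b`. -/
theorem fast_diagonalization_3D
    {n : ℕ} (M₁ M₂ M₃ K₁ K₂ K₃ U₁ U₂ U₃ D₁ D₂ D₃ : Matrix (Fin n) (Fin n) ℝ)
    (hM₁ : IsUnit M₁) (hM₂ : IsUnit M₂) (hM₃ : IsUnit M₃)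
    (hU₁ : IsUnit U₁) (hU₂ : IsUnit U₂) (hU₃ : IsUnit U₃)
    (h₁ : M₁⁻¹ * K₁ * U₁ = U₁ * D₁) (h₂ : M₂⁻¹ * K₂ * U₂ = U₂ * D₂)
    (h₃ : M₃⁻¹ * K₃ * U₃ = U₃ * D₃)
    (V₁ V₂ V₃ : Matrix (Fin n) (Fin n) ℝ)
    (hV₁ : V₁ = ((M₁ * U₁)ᵀ)⁻¹) (hV₂ : V₂ = ((M₂ * U₂)ᵀ)⁻¹) (hV₃ : V₃ = ((M₃ * U₃)ᵀ)⁻¹)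
    (T : Matrix (Fin n × (Fin n × Fin n)) (Fin n × (Fin n × Fin n)) ℝ)
    (hT : T = D₃ ⊗ₖ ((1 : Matrix (Fin n) (Fin n) ℝ) ⊗ₖ (1 : Matrix (Fin n) (Fin n) ℝ)) +
      (1 : Matrix (Fin n) (Fin n) ℝ) ⊗ₖ (D₂ ⊗ₖ (1 : Matrix (Fin n) (Fin n) ℝ)) +
      (1 : Matrix (Fin n) (Fin n) ℝ) ⊗ₖ ((1 : Matrix (Fin n) (Fin n) ℝ) ⊗ₖ D₁))
    (hTunit : IsUnit T) :
    ∀ b : Fin n × (Fin n × Fin n) → ℝ,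
      (K₃ ⊗ₖ (M₂ ⊗ₖ M₁) + M₃ ⊗ₖ (K₂ ⊗ₖ M₁) + M₃ ⊗ₖ (M₂ ⊗ₖ K₁)).mulVec
        (((U₃ ⊗ₖ (U₂ ⊗ₖ U₁)) * T⁻¹ * (V₃ ⊗ₖ (V₂ ⊗ₖ V₁))ᵀ).mulVec b) = b := by
  intro b
  have hdM₁ := (Matrix.isUnit_iff_isUnit_det _).mp hM₁
  have hdM₂ := (Matrix.isUnit_iff_isUnit_det _).mp hM₂
  have hdM₃ := (Matrix.isUnit_iff_isUnit_det _).mp hM₃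
  -- K_l U_l = (M_l U_l) D_l
  have k₁ : K₁ * U₁ = M₁ * U₁ * D₁ := by
    have := congrArg (M₁ * ·) h₁
    simpa [← Matrix.mul_assoc, Matrix.mul_nonsing_inv _ hdM₁] using this
  have k₂ : K₂ * U₂ = M₂ * U₂ * D₂ := by
    have := congrArg (M₂ * ·) h₂
    simpa [← Matrix.mul_assoc, Matrix.mul_nonsing_inv _ hdM₂] using this
  have k₃ : K₃ * U₃ = M₃ * U₃ * D₃ := by
    have := congrArg (M₃ * ·) h₃
    simpa [← Matrix.mul_assoc, Matrix.mul_nonsing_inv _ hdM₃] using this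
  have hW₁ : IsUnit (M₁ * U₁) := hM₁.mul hU₁
  have hW₂ : IsUnit (M₂ * U₂) := hM₂.mul hU₂
  have hW₃ : IsUnit (M₃ * U₃) := hM₃.mul hU₃
  have hVt₁ : V₁ᵀ = (M₁ * U₁)⁻¹ := by
    rw [hV₁, ← Matrix.transpose_nonsing_inv, Matrix.transpose_transpose]
  have hVt₂ : V₂ᵀ = (M₂ * U₂)⁻¹ := by
    rw [hV₂, ← Matrix.transpose_nonsing_inv, Matrix.transpose_transpose]
  have hVt₃ : V₃ᵀ = (M₃ * U₃)⁻¹ := by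
    rw [hV₃, ← Matrix.transpose_nonsing_inv, Matrix.transpose_transpose]
  set W : Matrix (Fin n × (Fin n × Fin n)) (Fin n × (Fin n × Fin n)) ℝ :=
    (M₃ * U₃) ⊗ₖ ((M₂ * U₂) ⊗ₖ (M₁ * U₁)) with hW
  have hWunit : IsUnit W := isUnit_kron hW₃ (isUnit_kron hW₂ hW₁)
  -- transpose of V kronecker
  have hVtk : (V₃ ⊗ₖ (V₂ ⊗ₖ V₁))ᵀ = W⁻¹ := by
    rw [← Matrix.kroneckerMap_transpose, ← Matrix.kroneckerMap_transpose,
      hVt₁, hVt₂, hVt₃, hW, Matrix.inv_kronecker, Matrix.inv_kronecker]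
  -- key identity
  have key : (K₃ ⊗ₖ (M₂ ⊗ₖ M₁) + M₃ ⊗ₖ (K₂ ⊗ₖ M₁) + M₃ ⊗ₖ (M₂ ⊗ₖ K₁)) *
      (U₃ ⊗ₖ (U₂ ⊗ₖ U₁)) = W * T := by
    rw [hT, hW]
    rw [Matrix.add_mul, Matrix.add_mul, Matrix.mul_add, Matrix.mul_add]
    simp only [← Matrix.mul_kronecker_mul, k₁, k₂, k₃, Matrix.mul_one, Matrix.one_mul]
  calc (K₃ ⊗ₖ (M₂ ⊗ₖ M₁) + M₃ ⊗ₖ (K₂ ⊗ₖ M₁) + M₃ ⊗ₖ (M₂ ⊗ₖ K₁)).mulVec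
        (((U₃ ⊗ₖ (U₂ ⊗ₖ U₁)) * T⁻¹ * (V₃ ⊗ₖ (V₂ ⊗ₖ V₁))ᵀ).mulVec b)
      = ((K₃ ⊗ₖ (M₂ ⊗ₖ M₁) + M₃ ⊗ₖ (K₂ ⊗ₖ M₁) + M₃ ⊗ₖ (M₂ ⊗ₖ K₁)) *
          ((U₃ ⊗ₖ (U₂ ⊗ₖ U₁)) * T⁻¹ * (V₃ ⊗ₖ (V₂ ⊗ₖ V₁))ᵀ)).mulVec b := by
        rw [Matrix.mulVec_mulVec]
    _ = b := by
        rw [hVtk, ← Matrix.mul_assoc, ← Matrix.mul_assoc, key, Matrix.mul_assoc,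
          Matrix.mul_assoc, ← Matrix.mul_assoc T,
          Matrix.mul_nonsing_inv _ ((Matrix.isUnit_iff_isUnit_det _).mp hTunit),
          Matrix.one_mul,
          Matrix.mul_nonsing_inv _ ((Matrix.isUnit_iff_isUnit_det _).mp hWunit),
          Matrix.one_mulVec]
end

section
/- Let R₁, R₂, R₃ be real n × n matrices with R₃ upper triangular, and let y, z : Fin n × (Fin n × Fin n) → ℝ be vectors with (R₃ ⊗ Iₙ ⊗ Iₙ + Iₙ ⊗ R₂ ⊗ Iₙ + Iₙ ⊗ Iₙ ⊗ R₁) y = z. For each k ∈ Fin n, write y_k, z_k : Fin n × Fin n → ℝ for the k-th blocks y_k(i, l) := y(k, (i, l)) and z_k(i, l) := z(k, (i, l)). Then for every k, ((R₂ + (R₃)_{kk} · Iₙ) ⊗ Iₙ + Iₙ ⊗ R₁) · y_k = z_k − Σ_{j > k} (R₃)_{kj} · y_j, where the left-hand side is a matrix-vector product on the index set Fin n × Fin n. -/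
open scoped Kronecker
open Matrix

/-- Block back-substitution identity (3D, Section 4.1 of the paper): if `R₃` is upper
triangular and `(R₃ ⊗ I ⊗ I + I ⊗ R₂ ⊗ I + I ⊗ I ⊗ R₁) y = z`, then for every block
index `k`, `((R₂ + (R₃)_{kk} I) ⊗ I + I ⊗ R₁) y_k = z_k − Σ_{j > k} (R₃)_{kj} y_j`. -/
theorem block_backsubstitution_3D
    {n : ℕ} (R₁ R₂ R₃ : Matrix (Fin n) (Fin n) ℝ)
    (hR₃ : ∀ k j : Fin n, j < k → R₃ k j = 0)
    (y z : Fin n × (Fin n × Fin n) → ℝ)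
    (h : (R₃ ⊗ₖ ((1 : Matrix (Fin n) (Fin n) ℝ) ⊗ₖ (1 : Matrix (Fin n) (Fin n) ℝ)) +
      (1 : Matrix (Fin n) (Fin n) ℝ) ⊗ₖ (R₂ ⊗ₖ (1 : Matrix (Fin n) (Fin n) ℝ)) +
      (1 : Matrix (Fin n) (Fin n) ℝ) ⊗ₖ ((1 : Matrix (Fin n) (Fin n) ℝ) ⊗ₖ R₁)).mulVec y
        = z) :
    ∀ k : Fin n,
      ((R₂ + R₃ k k • (1 : Matrix (Fin n) (Fin n) ℝ)) ⊗ₖ (1 : Matrix (Fin n) (Fin n) ℝ) +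
        (1 : Matrix (Fin n) (Fin n) ℝ) ⊗ₖ R₁).mulVec (fun il => y (k, il)) =
      (fun il => z (k, il)) -
        ∑ j ∈ Finset.univ.filter (fun j => k < j), R₃ k j • (fun il => y (j, il)) := by
  intro k
  funext il
  obtain ⟨i, l⟩ := il
  have h' := congrFun h (k, i, l)
  simp only [mulVec, dotProduct, Fintype.sum_prod_type, Matrix.add_apply,
    kroneckerMap_apply, Matrix.one_apply, Matrix.smul_apply, smul_eq_mul,
    mul_ite, mul_one, mul_zero, ite_mul, zero_mul, one_mul, add_mul,
    Finset.sum_add_distrib, Finset.sum_ite_eq, Finset.sum_ite_eq',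
    Finset.mem_univ, if_true] at h' ⊢
  -- split the sum over j in h'
  have hsplit : (∑ j, R₃ k j * y (j, i, l)) =
      R₃ k k * y (k, i, l) + ∑ j ∈ Finset.univ.filter (fun j => k < j), R₃ k j * y (j, i, l) := by
    rw [← Finset.sum_filter_add_sum_filter_not Finset.univ (fun j => k < j)]
    rw [add_comm]
    congr 1
    rw [Finset.sum_eq_single k]
    · intro j hj hjk
      simp only [Finset.mem_filter, not_lt] at hj
      rw [hR₃ k j (lt_of_le_of_ne hj.2 hjk), zero_mul]
    · intro hk
      simp at hk
  have e1 : ∀ (a : Fin n) (f : Fin n → Fin n → ℝ),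
      (∑ x : Fin n, ∑ x1 : Fin n, if a = x then f x x1 else 0) = ∑ x1, f a x1 := by
    intro a f
    rw [Finset.sum_comm]
    simp
  have e2 : ∀ (g : Fin n → Fin n → Fin n → ℝ),
      (∑ x : Fin n, ∑ x1 : Fin n, ∑ x2 : Fin n,
        if i = x1 then if k = x then g x x1 x2 else 0 else 0) = ∑ x2, g k i x2 := by
    intro g
    have : ∀ x : Fin n, (∑ x1 : Fin n, ∑ x2 : Fin n,
        if i = x1 then if k = x then g x x1 x2 else 0 else 0)
        = ∑ x2, if k = x then g x i x2 else 0 := by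
      intro x
      rw [Finset.sum_comm]
      simp
    simp only [this]
    rw [Finset.sum_comm]
    simp
  rw [e1, e2] at h'
  rw [e1]
  simp only [Pi.sub_apply, Finset.sum_apply, Pi.smul_apply, smul_eq_mul]
  rw [← h', hsplit]
  ring
end
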